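/- arXiv:2309.10666 — 9 statements merged into one kernel-verified Lean document; each statement's English description precedes it below -/
import Mathlib

section
/- The maximum of δ_Y over (a, b] is attained at s = μ and equals the partial expectation of μ − Y over the event {a < Y ≤ μ}: sup_{s ∈ (a, b]} δ_Y(s) = δ_Y(μ) = E_{a,μ}[μ − Y]. -/
open MeasureTheory

/-! `s ↦ min s μ - E[min s Y]` is the Jensen gap of the concave function `min s ·`. It is
nonnegative, nondecreasing in `s` up to `μ` (raising the cap from `s` to `μ` adds `μ - s` to the
first term and at most `μ - s` to the second), and nonincreasing beyond `μ`. Its value at `μ` is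
`E[(μ - Y)⁺]`, the partial expectation of `μ - Y` over `{Y ≤ μ}`. -/

section

variable {Ω : Type*} [MeasurableSpace Ω] {P : Measure Ω} {Y : Ω → ℝ}

lemma MeasureTheory.Integrable.const_min [IsFiniteMeasure P] (hY : Integrable Y P) (s : ℝ) :
    Integrable (fun ω => min s (Y ω)) P :=
  (integrable_const s).inf hY

variable [IsProbabilityMeasure P]

lemma lt_integral_of_ae_lt {a : ℝ} (hY : Integrable Y P)
    (h : ∀ᵐ ω ∂P, a < Y ω) : a < ∫ ω, Y ω ∂P := by
  have hnonneg : 0 ≤ᵐ[P] fun ω => Y ω - a := h.mono fun ω hω => (sub_pos.2 hω).le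
  have hpos : 0 < ∫ ω, (Y ω - a) ∂P := by
    rw [integral_pos_iff_support_of_nonneg_ae hnonneg (hY.sub (integrable_const a)),
      pos_iff_ne_zero, Ne, measure_eq_zero_iff_ae_notMem]
    intro hzero
    obtain ⟨ω, hlt, hω⟩ := (h.and hzero).exists
    simp only [Function.mem_support, ne_eq, not_not, sub_eq_zero] at hω
    exact hlt.ne' hω
  simpa [integral_sub hY (integrable_const a)] using hpos

lemma integral_le_of_ae_le {b : ℝ} (hY : Integrable Y P)
    (h : ∀ᵐ ω ∂P, Y ω ≤ b) : ∫ ω, Y ω ∂P ≤ b := by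
  simpa using integral_mono_ae hY (integrable_const b) h

lemma integral_min_le_min_integral (hY : Integrable Y P) (s : ℝ) :
    ∫ ω, min s (Y ω) ∂P ≤ min s (∫ ω, Y ω ∂P) :=
  le_min (integral_le_of_ae_le (hY.const_min s) (.of_forall fun _ => min_le_left _ _))
    (integral_mono (hY.const_min s) hY fun _ => min_le_right _ _)

lemma min_sub_integral_min_le (hY : Integrable Y P) (s : ℝ) :
    min s (∫ ω, Y ω ∂P) - ∫ ω, min s (Y ω) ∂P
      ≤ ∫ ω, Y ω ∂P - ∫ ω, min (∫ ω', Y ω' ∂P) (Y ω) ∂P := by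
  set μ := ∫ ω, Y ω ∂P
  rcases le_total μ s with hμs | hsμ
  · have hmono : ∫ ω, min μ (Y ω) ∂P ≤ ∫ ω, min s (Y ω) ∂P :=
      integral_mono (hY.const_min μ) (hY.const_min s) fun _ => min_le_min_right _ hμs
    rw [min_eq_right hμs]
    linarith
  · have hgap : ∫ ω, (min μ (Y ω) - min s (Y ω)) ∂P ≤ μ - s := by
      refine integral_le_of_ae_le ((hY.const_min μ).sub (hY.const_min s))
        (.of_forall fun ω => ?_)
      simp only [min_def]
      split_ifs <;> linarith
    rw [integral_sub (hY.const_min μ) (hY.const_min s)] at hgap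
    rw [min_eq_left hsμ]
    linarith

lemma sub_integral_min_eq_setIntegral (hY : Integrable Y P) {a : ℝ}
    (ha : ∀ᵐ ω ∂P, a < Y ω) (c : ℝ) :
    c - ∫ ω, min c (Y ω) ∂P = ∫ ω in {ω | Y ω ∈ Set.Ioc a c}, (c - Y ω) ∂P := by
  have hpos_part : (fun ω => c - min c (Y ω)) =ᵐ[P]
      {ω | Y ω ∈ Set.Ioc a c}.indicator fun ω => c - Y ω := by
    filter_upwards [ha] with ω haω
    by_cases hYc : Y ω ≤ c
    · have hmem : ω ∈ {ω | Y ω ∈ Set.Ioc a c} := ⟨haω, hYc⟩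
      rw [Set.indicator_of_mem hmem, min_eq_right hYc]
    · have hnotMem : ω ∉ {ω | Y ω ∈ Set.Ioc a c} := fun hmem => hYc hmem.2
      rw [Set.indicator_of_notMem hnotMem, min_eq_left (le_of_not_ge hYc), sub_self]
  have hmeas : NullMeasurableSet {ω | Y ω ∈ Set.Ioc a c} P :=
    hY.aemeasurable.nullMeasurable measurableSet_Ioc
  rw [← integral_indicator₀ hmeas, ← integral_congr_ae hpos_part,
    integral_sub (integrable_const c) (hY.const_min c), integral_const, probReal_univ, one_smul]

end

theorem delta_max_at_mean_general {Ω : Type*} [MeasurableSpace Ω]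
    (P : Measure Ω) [IsProbabilityMeasure P]
    (a b : ℝ)
    (Y : Ω → ℝ) (hY : Integrable Y P)
    (hsupp : P {ω | Y ω ∈ Set.Ioc a b} = 1) :
    IsGreatest
        ((fun s : ℝ => |min s (∫ ω, Y ω ∂P) - ∫ ω, min s (Y ω) ∂P|) '' Set.Ioc a b)
        (|min (∫ ω, Y ω ∂P) (∫ ω, Y ω ∂P)
            - ∫ ω, min (∫ ω', Y ω' ∂P) (Y ω) ∂P|) ∧
      |min (∫ ω, Y ω ∂P) (∫ ω, Y ω ∂P) - ∫ ω, min (∫ ω', Y ω' ∂P) (Y ω) ∂P|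
        = ∫ ω in {ω | Y ω ∈ Set.Ioc a (∫ ω', Y ω' ∂P)}, ((∫ ω', Y ω' ∂P) - Y ω) ∂P := by
  set μ := ∫ ω, Y ω ∂P
  have hae : ∀ᵐ ω ∂P, Y ω ∈ Set.Ioc a b :=
    (ae_iff_measure_eq (hY.aemeasurable.nullMeasurable measurableSet_Ioc)).2
      (by rw [hsupp, measure_univ])
  have hμ : μ ∈ Set.Ioc a b :=
    ⟨lt_integral_of_ae_lt hY (hae.mono fun _ h => h.1),
      integral_le_of_ae_le hY (hae.mono fun _ h => h.2)⟩
  have hδ : ∀ s, |min s μ - ∫ ω, min s (Y ω) ∂P| = min s μ - ∫ ω, min s (Y ω) ∂P :=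
    fun s => abs_of_nonneg (sub_nonneg.2 (integral_min_le_min_integral hY s))
  refine ⟨⟨⟨μ, hμ, rfl⟩, ?_⟩, ?_⟩
  · rintro _ ⟨s, -, rfl⟩
    simp only [hδ]
    rw [min_self]
    exact min_sub_integral_min_le hY s
  · rw [hδ, min_self]
    exact sub_integral_min_eq_setIntegral hY (hae.mono fun _ h => h.1) μ

/-- With `Y` integrable, `P(a < Y ≤ b) = 1`, `μ = E[Y]` and
`δ_Y(s) = |min(s,μ) − E[min(s,Y)]|`, the maximum of `δ_Y` over `(a, b]` is attained at
`s = μ` and equals the partial expectation `E_{a,μ}[μ − Y]`. -/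
theorem delta_max_at_mean {Ω : Type*} [MeasurableSpace Ω]
    (P : Measure Ω) [IsProbabilityMeasure P]
    (a b : ℝ) (hab : a < b)
    (Y : Ω → ℝ) (hY : Integrable Y P)
    (hsupp : P {ω | Y ω ∈ Set.Ioc a b} = 1) :
    IsGreatest
        ((fun s : ℝ => |min s (∫ ω, Y ω ∂P) - ∫ ω, min s (Y ω) ∂P|) '' Set.Ioc a b)
        (|min (∫ ω, Y ω ∂P) (∫ ω, Y ω ∂P)
            - ∫ ω, min (∫ ω', Y ω' ∂P) (Y ω) ∂P|) ∧
      |min (∫ ω, Y ω ∂P) (∫ ω, Y ω ∂P) - ∫ ω, min (∫ ω', Y ω' ∂P) (Y ω) ∂P|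
        = ∫ ω in {ω | Y ω ∈ Set.Ioc a (∫ ω', Y ω' ∂P)}, ((∫ ω', Y ω' ∂P) - Y ω) ∂P :=
  delta_max_at_mean_general P a b Y hY hsupp
end

section
/- Assume P_A := P(Y ≤ μ) > 0 and P_B := P(Y > μ) > 0, and set μ_A = E[Y | Y ≤ μ] and μ_B = E[Y | Y > μ]. Then δ_Y(μ) = (μ − μ_A)(μ_B − μ)/(μ_B − μ_A). -/
open MeasureTheory

/-- Conditional expectation `E[Y | A] = E[1_A · Y] / P(A)`. -/
noncomputable def condMean {Ω : Type*} [MeasurableSpace Ω]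
    (P : Measure Ω) (Y : Ω → ℝ) (A : Set Ω) : ℝ :=
  (∫ ω in A, Y ω ∂P) / (P A).toReal

/-! Split at the mean into `A = {Y ≤ μ}` and `B = {μ < Y}` with weights `p_A + p_B = 1`. On `A` the
truncation `min μ Y` is `Y`, on `B` it is `μ`, so `μ - E[min μ Y] = p_A (μ - μ_A)`. On the other
side, `μ = p_A μ_A + p_B μ_B` gives `μ - μ_A = p_B (μ_B - μ_A)` and `μ_B - μ = p_A (μ_B - μ_A)`,
so the quotient is `p_A p_B (μ_B - μ_A) = p_A (μ - μ_A)` too. -/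

lemma sub_mul_sub_div_sub_of_eq_add {p q m x y : ℝ} (hpq : p + q = 1) (hm : m = p * x + q * y) :
    (m - x) * (y - m) / (y - x) = p * (m - x) := by
  have hx : m - x = q * (y - x) := by linear_combination hm + x * hpq
  have hy : y - m = p * (y - x) := by linear_combination -hm - y * hpq
  rcases eq_or_ne (y - x) 0 with h | h
  · simp [hx, h]
  · rw [hx, hy]; field_simp

namespace ProbabilityTheory

variable {Ω : Type*} [MeasurableSpace Ω] {P : Measure Ω} {Y : Ω → ℝ}

lemma measureReal_mul_condMean {A : Set Ω} (hA : P.real A ≠ 0) :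
    P.real A * condMean P Y A = ∫ ω in A, Y ω ∂P := by
  rw [condMean, ← measureReal_def]; field_simp

lemma integral_eq_add_condMean_compl (hY : Integrable Y P) {A : Set Ω}
    (hAm : NullMeasurableSet A P) (hA : P.real A ≠ 0) (hAc : P.real Aᶜ ≠ 0) :
    ∫ ω, Y ω ∂P = P.real A * condMean P Y A + P.real Aᶜ * condMean P Y Aᶜ := by
  rw [measureReal_mul_condMean hA, measureReal_mul_condMean hAc, integral_add_compl₀ hAm hY]

omit [MeasurableSpace Ω] in
lemma compl_setOf_le (c : ℝ) : {ω | Y ω ≤ c}ᶜ = {ω | c < Y ω} := by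
  ext; simp

lemma measureReal_le_add_measureReal_lt [IsProbabilityMeasure P] (hY : AEMeasurable Y P)
    (c : ℝ) : P.real {ω | Y ω ≤ c} + P.real {ω | c < Y ω} = 1 := by
  rw [← compl_setOf_le, measureReal_add_measureReal_compl₀
    (nullMeasurableSet_le hY aemeasurable_const), probReal_univ]

lemma integral_min_const_eq [IsFiniteMeasure P] (hY : Integrable Y P) (c : ℝ) :
    ∫ ω, min c (Y ω) ∂P = ∫ ω in {ω | Y ω ≤ c}, Y ω ∂P + P.real {ω | c < Y ω} * c := by
  have hAm : NullMeasurableSet {ω | Y ω ≤ c} P :=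
    nullMeasurableSet_le hY.aemeasurable aemeasurable_const
  have hmin : Integrable (fun ω => min c (Y ω)) P := (integrable_const c).inf hY
  rw [← integral_add_compl₀ hAm hmin, compl_setOf_le,
    setIntegral_congr_fun₀ hAm fun ω (hω : Y ω ≤ c) => min_eq_right hω,
    setIntegral_congr_fun₀ (nullMeasurableSet_lt aemeasurable_const hY.aemeasurable)
      fun ω (hω : c < Y ω) => min_eq_left hω.le,
    setIntegral_const, smul_eq_mul]

lemma integral_min_const_le [IsProbabilityMeasure P] (hY : Integrable Y P) (c : ℝ) :
    ∫ ω, min c (Y ω) ∂P ≤ c :=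
  (integral_mono ((integrable_const c).inf hY) (integrable_const c) fun _ => min_le_left _ _).trans
    (by simp)

lemma const_sub_integral_min_eq [IsProbabilityMeasure P] (hY : Integrable Y P) (c : ℝ) :
    c - ∫ ω, min c (Y ω) ∂P = P.real {ω | Y ω ≤ c} * c - ∫ ω in {ω | Y ω ≤ c}, Y ω ∂P := by
  rw [integral_min_const_eq hY]
  linear_combination (-c) * measureReal_le_add_measureReal_lt hY.aemeasurable c

end ProbabilityTheory

open ProbabilityTheory in
theorem delta_at_mean_formula_general {Ω : Type*} [MeasurableSpace Ω]
    (P : Measure Ω) [IsProbabilityMeasure P]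
    (Y : Ω → ℝ) (hY : Integrable Y P)
    (hA : 0 < (P {ω | Y ω ≤ ∫ ω', Y ω' ∂P}).toReal)
    (hB : 0 < (P {ω | (∫ ω', Y ω' ∂P) < Y ω}).toReal) :
    |min (∫ ω, Y ω ∂P) (∫ ω, Y ω ∂P) - ∫ ω, min (∫ ω', Y ω' ∂P) (Y ω) ∂P|
      = (((∫ ω, Y ω ∂P) - condMean P Y {ω | Y ω ≤ ∫ ω', Y ω' ∂P})
          * (condMean P Y {ω | (∫ ω', Y ω' ∂P) < Y ω} - ∫ ω, Y ω ∂P))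
        / (condMean P Y {ω | (∫ ω', Y ω' ∂P) < Y ω}
            - condMean P Y {ω | Y ω ≤ ∫ ω', Y ω' ∂P}) := by
  set μ := ∫ ω', Y ω' ∂P
  rw [← measureReal_def] at hA hB
  have hμ := integral_eq_add_condMean_compl hY
    (nullMeasurableSet_le hY.aemeasurable aemeasurable_const) hA.ne'
    (compl_setOf_le (Y := Y) μ ▸ hB.ne')
  rw [compl_setOf_le] at hμ
  rw [sub_mul_sub_div_sub_of_eq_add (measureReal_le_add_measureReal_lt hY.aemeasurable μ) hμ,
    min_self, abs_of_nonneg (sub_nonneg.2 (integral_min_const_le hY μ)),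
    const_sub_integral_min_eq hY, mul_sub, measureReal_mul_condMean hA.ne']

/-- With `Y` integrable, `P(a < Y ≤ b) = 1`, `μ = E[Y]`,
`δ_Y(s) = |min(s,μ) − E[min(s,Y)]|`, if `P_A = P(Y ≤ μ) > 0` and `P_B = P(Y > μ) > 0`,
and `μ_A = E[Y | Y ≤ μ]`, `μ_B = E[Y | Y > μ]`, then
`δ_Y(μ) = (μ − μ_A)(μ_B − μ)/(μ_B − μ_A)`. -/
theorem delta_at_mean_formula {Ω : Type*} [MeasurableSpace Ω]
    (P : Measure Ω) [IsProbabilityMeasure P]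
    (a b : ℝ) (hab : a < b)
    (Y : Ω → ℝ) (hY : Integrable Y P)
    (hsupp : P {ω | Y ω ∈ Set.Ioc a b} = 1)
    (hA : 0 < (P {ω | Y ω ≤ ∫ ω', Y ω' ∂P}).toReal)
    (hB : 0 < (P {ω | (∫ ω', Y ω' ∂P) < Y ω}).toReal) :
    |min (∫ ω, Y ω ∂P) (∫ ω, Y ω ∂P) - ∫ ω, min (∫ ω', Y ω' ∂P) (Y ω) ∂P|
      = (((∫ ω, Y ω ∂P) - condMean P Y {ω | Y ω ≤ ∫ ω', Y ω' ∂P})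
          * (condMean P Y {ω | (∫ ω', Y ω' ∂P) < Y ω} - ∫ ω, Y ω ∂P))
        / (condMean P Y {ω | (∫ ω', Y ω' ∂P) < Y ω}
            - condMean P Y {ω | Y ω ≤ ∫ ω', Y ω' ∂P}) :=
  delta_at_mean_formula_general P Y hY hA hB
end

section
/- The one-breakpoint piecewise linear approximation error is bounded by a quarter of the interval length: sup_{s ∈ (a, b]} δ_Y(s) ≤ (b − a)/4. -/
/-!
With `u = E[(s - Y)⁺]` and `v = E[(Y - s)⁺]` one has `u - v = s - μ` and
`E[min(s, Y)] = s - u`, so `δ_Y(s) = min(u, v)`. On `[a, b]` the pointwise bound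
`(b - s)(s - Y)⁺ + (s - a)(Y - s)⁺ ≤ (s - a)(b - s)` integrates to
`(b - a) min(u, v) ≤ (s - a)(b - s) ≤ (b - a)² / 4`.
-/

open MeasureTheory

lemma min_sub_sub_eq_min_of_sub_eq {s m u v : ℝ} (h : u - v = s - m) :
    min s m - (s - u) = min u v := by
  rcases le_total s m with hsm | hms
  · rw [min_eq_left hsm, min_eq_left (by linarith)]; ring
  · rw [min_eq_right hms, min_eq_right (by linarith)]; linarith

lemma min_le_quarter_of_weighted_le {a b s u v : ℝ} (has : a < s) (hsb : s ≤ b)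
    (h : (b - s) * u + (s - a) * v ≤ (s - a) * (b - s)) :
    min u v ≤ (b - a) / 4 := by
  have hba : 0 < b - a := by linarith
  have hmul : (b - a) * min u v ≤ (b - a) ^ 2 / 4 := by
    nlinarith [min_le_left u v, min_le_right u v, sq_nonneg (b + a - 2 * s)]
  rw [le_div_iff₀ (by norm_num : (0:ℝ) < 4)]
  nlinarith

lemma weighted_pos_parts_le {a b s y : ℝ} (hay : a ≤ y) (hyb : y ≤ b) (has : a ≤ s)
    (hsb : s ≤ b) :
    (b - s) * max (s - y) 0 + (s - a) * max (y - s) 0 ≤ (s - a) * (b - s) := by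
  rcases le_total y s with hys | hsy
  · rw [max_eq_left (by linarith), max_eq_right (by linarith)]; nlinarith
  · rw [max_eq_right (by linarith), max_eq_left (by linarith)]; nlinarith

section

variable {Ω : Type*} [MeasurableSpace Ω] {P : Measure Ω} [IsProbabilityMeasure P]
  {Y : Ω → ℝ}

theorem min_integral_sub_integral_min_eq (hY : Integrable Y P) (s : ℝ) :
    min s (∫ ω, Y ω ∂P) - ∫ ω, min s (Y ω) ∂P =
      min (∫ ω, max (s - Y ω) 0 ∂P) (∫ ω, max (Y ω - s) 0 ∂P) := by
  have hlow : Integrable (fun ω ↦ max (s - Y ω) 0) P := ((integrable_const s).sub hY).pos_part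
  have hup : Integrable (fun ω ↦ max (Y ω - s) 0) P := (hY.sub (integrable_const s)).pos_part
  have hmin : ∫ ω, min s (Y ω) ∂P = s - ∫ ω, max (s - Y ω) 0 ∂P := by
    have hpt : ∀ ω, min s (Y ω) = s - max (s - Y ω) 0 := fun ω ↦ by
      rcases le_total s (Y ω) with h | h
      · rw [min_eq_left h, max_eq_right (by linarith)]; ring
      · rw [min_eq_right h, max_eq_left (by linarith)]; ring
    simp_rw [hpt]
    rw [integral_sub (integrable_const s) hlow, integral_const, probReal_univ, one_smul]
  have hdiff :
      ∫ ω, max (s - Y ω) 0 ∂P - ∫ ω, max (Y ω - s) 0 ∂P = s - ∫ ω, Y ω ∂P := by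
    have hpt : ∀ ω, max (s - Y ω) 0 - max (Y ω - s) 0 = s - Y ω := fun ω ↦ by
      rcases le_total s (Y ω) with h | h
      · rw [max_eq_right (by linarith), max_eq_left (by linarith)]; ring
      · rw [max_eq_left (by linarith), max_eq_right (by linarith)]; ring
    rw [← integral_sub hlow hup]
    simp_rw [hpt]
    rw [integral_sub (integrable_const s) hY, integral_const, probReal_univ, one_smul]
  rw [hmin]
  exact min_sub_sub_eq_min_of_sub_eq hdiff

theorem integral_weighted_pos_parts_le {a b s : ℝ} (hY : Integrable Y P)
    (hYab : ∀ᵐ ω ∂P, Y ω ∈ Set.Icc a b) (has : a ≤ s) (hsb : s ≤ b) :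
    (b - s) * ∫ ω, max (s - Y ω) 0 ∂P + (s - a) * ∫ ω, max (Y ω - s) 0 ∂P ≤
      (s - a) * (b - s) := by
  have hlow : Integrable (fun ω ↦ max (s - Y ω) 0) P := ((integrable_const s).sub hY).pos_part
  have hup : Integrable (fun ω ↦ max (Y ω - s) 0) P := (hY.sub (integrable_const s)).pos_part
  rw [← integral_const_mul, ← integral_const_mul,
    ← integral_add (hlow.const_mul _) (hup.const_mul _)]
  calc _ ≤ ∫ _, (s - a) * (b - s) ∂P :=
        integral_mono_ae ((hlow.const_mul _).add (hup.const_mul _)) (integrable_const _)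
          (hYab.mono fun ω hω ↦ weighted_pos_parts_le hω.1 hω.2 has hsb)
    _ = (s - a) * (b - s) := by simp

end

theorem delta_le_quarter_general {Ω : Type*} [MeasurableSpace Ω]
    (P : Measure Ω) [IsProbabilityMeasure P]
    (a b : ℝ)
    (Y : Ω → ℝ) (hY : Integrable Y P)
    (hsupp : P {ω | Y ω ∈ Set.Ioc a b} = 1) :
    ∀ s ∈ Set.Ioc a b,
      |min s (∫ ω, Y ω ∂P) - ∫ ω, min s (Y ω) ∂P| ≤ (b - a) / 4 := by
  rintro s ⟨has, hsb⟩
  have hYab : ∀ᵐ ω ∂P, Y ω ∈ Set.Icc a b := by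
    have hIoc : ∀ᵐ ω ∂P, Y ω ∈ Set.Ioc a b := (mem_ae_iff_prob_eq_one₀
      (hY.aemeasurable.nullMeasurableSet_preimage measurableSet_Ioc)).2 hsupp
    exact hIoc.mono fun ω hω ↦ Set.Ioc_subset_Icc_self hω
  rw [min_integral_sub_integral_min_eq hY, abs_of_nonneg (le_min
    (integral_nonneg fun _ ↦ le_max_right _ _) (integral_nonneg fun _ ↦ le_max_right _ _))]
  exact min_le_quarter_of_weighted_le has hsb
    (integral_weighted_pos_parts_le hY hYab has.le hsb)

/-- With `Y` integrable, `P(a < Y ≤ b) = 1`, `μ = E[Y]` and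
`δ_Y(s) = |min(s,μ) − E[min(s,Y)]|`, the one-breakpoint piecewise-linear approximation
error is bounded by a quarter of the interval length:
`sup_{s ∈ (a,b]} δ_Y(s) ≤ (b − a)/4`. -/
theorem delta_le_quarter {Ω : Type*} [MeasurableSpace Ω]
    (P : Measure Ω) [IsProbabilityMeasure P]
    (a b : ℝ) (hab : a < b)
    (Y : Ω → ℝ) (hY : Integrable Y P)
    (hsupp : P {ω | Y ω ∈ Set.Ioc a b} = 1) :
    ∀ s ∈ Set.Ioc a b,
      |min s (∫ ω, Y ω ∂P) - ∫ ω, min s (Y ω) ∂P| ≤ (b - a) / 4 :=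
  delta_le_quarter_general P a b Y hY hsupp
end

section
/- For every k ∈ {1, …, n} and every t ∈ I_k, the approximation gap localizes to the interval containing t: f̃(t) − f_X(t) = p_k · ( min(t, μ_k) − E[min(t, X) | X ∈ I_k] ), and this quantity is nonnegative. -/
/-!
The events `{X ∈ I_j}` partition `Ω`, so `f_X(t) = ∑ⱼ E[min(t, X); X ∈ I_j]`, term by term against
`f̃(t) = ∑ⱼ pⱼ min(t, μⱼ)`. On a cell left of `t` both `X ≤ t` and `μⱼ ≤ t`, so both terms equal
`E[X; X ∈ I_j]`; on a cell right of `t` both equal `pⱼ t`. Only the cell containing `t` survives,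
and there `E[min(t, X); A] ≤ min(t P(A), E[X; A]) = P(A) min(t, μ_A)` gives nonnegativity.
-/

open MeasureTheory

/-- The `j`-th region of the partition of `ℝ` induced by points `q 0 < q 1 < ⋯ < q n`:
`I_0 = (−∞, q 0]`, `I_j = (q (j−1), q j]` for `1 ≤ j ≤ n`, and `I_{n+1} = (q n, ∞)`. -/
noncomputable def seg (q : ℕ → ℝ) (n j : ℕ) : Set ℝ :=
  if j = 0 then Set.Iic (q 0)
  else if j ≤ n then Set.Ioc (q (j - 1)) (q j)
  else Set.Ioi (q n)

/-- `p_j = P(X ∈ I_j)`. -/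
noncomputable def segProb {Ω : Type*} [MeasurableSpace Ω]
    (P : Measure Ω) (X : Ω → ℝ) (q : ℕ → ℝ) (n j : ℕ) : ℝ :=
  (P {ω | X ω ∈ seg q n j}).toReal

/-- `μ_j = E[X | X ∈ I_j] = E[1_{X ∈ I_j} X] / p_j`. -/
noncomputable def segMean {Ω : Type*} [MeasurableSpace Ω]
    (P : Measure Ω) (X : Ω → ℝ) (q : ℕ → ℝ) (n j : ℕ) : ℝ :=
  (∫ ω in {ω | X ω ∈ seg q n j}, X ω ∂P) / segProb P X q n j

/-- The induced piecewise linear approximation `f̃(s) = ∑_{j=0}^{n+1} p_j · min(s, μ_j)`. -/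
noncomputable def ftilde {Ω : Type*} [MeasurableSpace Ω]
    (P : Measure Ω) (X : Ω → ℝ) (q : ℕ → ℝ) (n : ℕ) (s : ℝ) : ℝ :=
  ∑ j ∈ Finset.range (n + 2), segProb P X q n j * min s (segMean P X q n j)

open Set Function

section Partition

variable {q : ℕ → ℝ} {n j k : ℕ}

lemma measurableSet_seg (q : ℕ → ℝ) (n j : ℕ) : MeasurableSet (seg q n j) := by
  unfold seg
  split_ifs <;> simp

lemma seg_subset_Iic (hj : j ≤ n) : seg q n j ⊆ Iic (q j) := by
  unfold seg
  split_ifs with h0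
  · rw [h0]
  · exact Ioc_subset_Iic_self

lemma seg_subset_Ioi (hj₀ : 1 ≤ j) (hj : j ≤ n + 1) : seg q n j ⊆ Ioi (q (j - 1)) := by
  unfold seg
  split_ifs with h0 hjn
  · omega
  · exact Ioc_subset_Ioi_self
  · rw [show j - 1 = n by omega]

lemma iUnion_seg (q : ℕ → ℝ) (n : ℕ) : ⋃ j ∈ Finset.range (n + 2), seg q n j = univ := by
  refine eq_univ_of_forall fun x => mem_iUnion₂.2 ?_
  by_cases hx : ∃ j, j ≤ n ∧ x ≤ q j
  · classical
    obtain ⟨hjn, hxj⟩ := Nat.find_spec hx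
    have hbelow : ∀ m < Nat.find hx, q m < x :=
      fun m hm => lt_of_not_ge fun h => Nat.find_min hx hm ⟨by omega, h⟩
    refine ⟨Nat.find hx, Finset.mem_range.2 (by omega), ?_⟩
    unfold seg
    split_ifs with h0
    · rwa [h0] at hxj
    · exact ⟨hbelow _ (by omega), hxj⟩
  · push Not at hx
    exact ⟨n + 1, Finset.mem_range.2 (by omega), by simpa [seg] using hx n le_rfl⟩

variable (hq : ∀ i < n, q i < q (i + 1))
include hq

lemma seg_subset_Iic_of_lt (hjk : j < k) (hk : k ≤ n + 1) : seg q n j ⊆ Iic (q (k - 1)) :=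
  (seg_subset_Iic (by omega)).trans <| Iic_subset_Iic.2 <|
    (strictMonoOn_Iic_of_lt_succ hq).monotoneOn (mem_Iic.2 (by omega)) (mem_Iic.2 (by omega))
      (by omega)

lemma seg_subset_Ioi_of_lt (hkj : k < j) (hj : j ≤ n + 1) : seg q n j ⊆ Ioi (q k) :=
  (seg_subset_Ioi (by omega) hj).trans <| Ioi_subset_Ioi <|
    (strictMonoOn_Iic_of_lt_succ hq).monotoneOn (mem_Iic.2 (by omega)) (mem_Iic.2 (by omega))
      (by omega)

lemma disjoint_seg_of_lt {i : ℕ} (hij : i < j) (hj : j ≤ n + 1) :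
    Disjoint (seg q n i) (seg q n j) :=
  (Iic_disjoint_Ioi le_rfl).mono (seg_subset_Iic_of_lt hq hij hj) (seg_subset_Ioi (by omega) hj)

lemma pairwise_disjoint_seg :
    (Finset.range (n + 2) : Set ℕ).Pairwise (Disjoint on (seg q n)) := by
  intro i hi j hj hij
  rw [Finset.mem_coe, Finset.mem_range] at hi hj
  rcases hij.lt_or_gt with h | h
  · exact disjoint_seg_of_lt hq h (by omega)
  · exact (disjoint_seg_of_lt hq h (by omega)).symm

end Partition

section Localization

variable {Ω : Type*} [MeasurableSpace Ω] {μ : Measure Ω} [IsFiniteMeasure μ] {A : Set Ω}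

lemma measureReal_mul_setIntegral_div (f : Ω → ℝ) :
    μ.real A * ((∫ ω in A, f ω ∂μ) / μ.real A) = ∫ ω in A, f ω ∂μ := by
  rcases eq_or_ne (μ.real A) 0 with h | h
  · have hA : μ A = 0 := (measureReal_eq_zero_iff (measure_ne_top μ A)).1 h
    rw [h, zero_mul, setIntegral_measure_zero f hA]
  · exact mul_div_cancel₀ _ h

lemma measureReal_mul_min_div (t : ℝ) (X : Ω → ℝ) :
    μ.real A * min t ((∫ ω in A, X ω ∂μ) / μ.real A)
      = min (μ.real A * t) (∫ ω in A, X ω ∂μ) := by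
  rw [mul_min_of_nonneg _ _ measureReal_nonneg, measureReal_mul_setIntegral_div]

variable {X : Ω → ℝ} (t : ℝ)

lemma setIntegral_min_le (hX : IntegrableOn X A μ) :
    ∫ ω in A, min t (X ω) ∂μ ≤ min (μ.real A * t) (∫ ω in A, X ω ∂μ) := by
  have hmin : IntegrableOn (fun ω => min t (X ω)) A μ := (integrable_const t).inf hX
  refine le_min ?_ (integral_mono hmin hX fun ω => min_le_right _ _)
  calc ∫ ω in A, min t (X ω) ∂μ ≤ ∫ _ in A, t ∂μ :=
        integral_mono hmin (integrable_const t) fun ω => min_le_left _ _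
    _ = μ.real A * t := setIntegral_const t

lemma min_eq_setIntegral_min_of_le (hA : MeasurableSet A) (hX : IntegrableOn X A μ)
    (h : ∀ ω ∈ A, X ω ≤ t) :
    min (μ.real A * t) (∫ ω in A, X ω ∂μ) = ∫ ω in A, min t (X ω) ∂μ := by
  rw [setIntegral_congr_fun hA fun ω hω => min_eq_right (h ω hω)]
  refine min_eq_right ?_
  calc ∫ ω in A, X ω ∂μ ≤ ∫ _ in A, t ∂μ := setIntegral_mono_on hX integrableOn_const hA h
    _ = μ.real A * t := setIntegral_const t

lemma min_eq_setIntegral_min_of_ge (hA : MeasurableSet A) (hX : IntegrableOn X A μ)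
    (h : ∀ ω ∈ A, t ≤ X ω) :
    min (μ.real A * t) (∫ ω in A, X ω ∂μ) = ∫ ω in A, min t (X ω) ∂μ := by
  rw [setIntegral_congr_fun hA fun ω hω => min_eq_left (h ω hω), setIntegral_const, smul_eq_mul]
  refine min_eq_left ?_
  calc μ.real A * t = ∫ _ in A, t ∂μ := (setIntegral_const t).symm
    _ ≤ ∫ ω in A, X ω ∂μ := setIntegral_mono_on integrableOn_const hX hA h

end Localization

section Congr

variable {Ω : Type*} [MeasurableSpace Ω] {P : Measure Ω} {X Y : Ω → ℝ} {q : ℕ → ℝ} {n : ℕ}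
  (hXY : X =ᵐ[P] Y)
include hXY

lemma setIntegral_setOf_mem_congr_ae (g : ℝ → ℝ) (s : Set ℝ) :
    ∫ ω in {ω | X ω ∈ s}, g (X ω) ∂P = ∫ ω in {ω | Y ω ∈ s}, g (Y ω) ∂P := by
  have hs : {ω | X ω ∈ s} =ᵐ[P] {ω | Y ω ∈ s} := hXY.preimage s
  rw [Measure.restrict_congr_set hs]
  exact integral_congr_ae (ae_restrict_of_ae (hXY.fun_comp g))

lemma segProb_congr_ae (j : ℕ) : segProb P X q n j = segProb P Y q n j :=
  congrArg ENNReal.toReal (measure_congr (hXY.preimage _))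

lemma segMean_congr_ae (j : ℕ) : segMean P X q n j = segMean P Y q n j := by
  rw [segMean, segMean, segProb_congr_ae hXY]
  congr 1
  exact setIntegral_setOf_mem_congr_ae hXY id _

lemma ftilde_congr_ae (t : ℝ) : ftilde P X q n t = ftilde P Y q n t := by
  simp only [ftilde, segProb_congr_ae hXY, segMean_congr_ae hXY]

end Congr

section Gap

variable {Ω : Type*} [MeasurableSpace Ω] {P : Measure Ω} {X : Ω → ℝ} {q : ℕ → ℝ} {n : ℕ}

lemma segProb_mul_setIntegral_div [IsFiniteMeasure P] (f : Ω → ℝ) (j : ℕ) :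
    segProb P X q n j * ((∫ ω in {ω | X ω ∈ seg q n j}, f ω ∂P) / segProb P X q n j)
      = ∫ ω in {ω | X ω ∈ seg q n j}, f ω ∂P :=
  measureReal_mul_setIntegral_div f

lemma segProb_mul_min_segMean [IsFiniteMeasure P] (t : ℝ) (j : ℕ) :
    segProb P X q n j * min t (segMean P X q n j)
      = min (P.real {ω | X ω ∈ seg q n j} * t) (∫ ω in {ω | X ω ∈ seg q n j}, X ω ∂P) :=
  measureReal_mul_min_div t X

lemma integral_eq_sum_setIntegral_seg (hXm : Measurable X) (hq : ∀ i < n, q i < q (i + 1))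
    {f : Ω → ℝ} (hf : Integrable f P) :
    ∫ ω, f ω ∂P = ∑ j ∈ Finset.range (n + 2), ∫ ω in {ω | X ω ∈ seg q n j}, f ω ∂P := by
  have hcover : ⋃ j ∈ Finset.range (n + 2), X ⁻¹' seg q n j = univ := by
    rw [← preimage_iUnion₂, iUnion_seg, preimage_univ]
  rw [← setIntegral_univ, ← hcover]
  exact integral_biUnion_finset _ (fun j _ => hXm (measurableSet_seg q n j))
    (fun i hi j hj hij => (pairwise_disjoint_seg hq hi hj hij).preimage X)
    fun j _ => hf.integrableOn

theorem ftilde_sub_integral_min_of_measurable [IsFiniteMeasure P] (hXm : Measurable X)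
    (hX : Integrable X P) (hq : ∀ i < n, q i < q (i + 1)) {k : ℕ} (hkn : k ≤ n) {t : ℝ}
    (ht : t ∈ Ioc (q (k - 1)) (q k)) :
    ftilde P X q n t - ∫ ω, min t (X ω) ∂P
      = segProb P X q n k * min t (segMean P X q n k)
          - ∫ ω in {ω | X ω ∈ seg q n k}, min t (X ω) ∂P := by
  have hmin : Integrable (fun ω => min t (X ω)) P := (integrable_const t).inf hX
  rw [ftilde, integral_eq_sum_setIntegral_seg hXm hq hmin,
    ← Finset.sum_sub_distrib, Finset.sum_eq_single_of_mem k (Finset.mem_range.2 (by omega))]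
  intro j hj hjk
  have hjn : j ≤ n + 1 := by rw [Finset.mem_range] at hj; omega
  rw [segProb_mul_min_segMean, sub_eq_zero]
  have hA := hXm (measurableSet_seg q n j)
  rcases hjk.lt_or_gt with hjk | hkj
  · exact min_eq_setIntegral_min_of_le t hA hX.integrableOn fun ω hω =>
      (seg_subset_Iic_of_lt hq hjk (by omega) hω).trans ht.1.le
  · exact min_eq_setIntegral_min_of_ge t hA hX.integrableOn fun ω hω =>
      ht.2.trans (seg_subset_Ioi_of_lt hq hkj hjn hω).le

end Gap

theorem gap_localizes_general {Ω : Type*} [MeasurableSpace Ω]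
    (P : Measure Ω) [IsProbabilityMeasure P]
    (X : Ω → ℝ) (hX : Integrable X P)
    (n : ℕ)
    (q : ℕ → ℝ)
    (hmono : ∀ i < n, q i < q (i + 1)) :
    ∀ k, 1 ≤ k → k ≤ n → ∀ t ∈ Set.Ioc (q (k - 1)) (q k),
      (ftilde P X q n t - ∫ ω, min t (X ω) ∂P
          = segProb P X q n k *
            (min t (segMean P X q n k)
              - (∫ ω in {ω | X ω ∈ seg q n k}, min t (X ω) ∂P) / segProb P X q n k)) ∧
        0 ≤ segProb P X q n k *
            (min t (segMean P X q n k)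
              - (∫ ω in {ω | X ω ∈ seg q n k}, min t (X ω) ∂P) / segProb P X q n k) := by
  intro k _ hkn t ht
  obtain ⟨Y, hYm, hXY⟩ := hX.aemeasurable
  have hY : Integrable Y P := hX.congr hXY
  have hmin : (fun ω => min t (X ω)) =ᵐ[P] fun ω => min t (Y ω) := hXY.fun_comp (min t)
  rw [ftilde_congr_ae hXY, integral_congr_ae hmin, segProb_congr_ae hXY,
    segMean_congr_ae hXY, setIntegral_setOf_mem_congr_ae hXY (min t), mul_sub,
    segProb_mul_setIntegral_div]
  refine ⟨ftilde_sub_integral_min_of_measurable hYm hY hmono hkn ht, sub_nonneg.2 ?_⟩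
  rw [segProb_mul_min_segMean]
  exact setIntegral_min_le t hY.integrableOn

/-- For every `k ∈ {1,…,n}` and every `t ∈ I_k = (q (k−1), q k]`,
`f̃(t) − f_X(t) = p_k · (min(t, μ_k) − E[min(t,X) | X ∈ I_k])`, and this is nonnegative. -/
theorem gap_localizes {Ω : Type*} [MeasurableSpace Ω]
    (P : Measure Ω) [IsProbabilityMeasure P]
    (X : Ω → ℝ) (hX : Integrable X P)
    (a b : ℝ) (hab : a < b) (n : ℕ) (hn : 1 ≤ n)
    (q : ℕ → ℝ) (hq0 : q 0 = a) (hqn : q n = b)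
    (hmono : ∀ i < n, q i < q (i + 1))
    (hpos : ∀ j ≤ n + 1, 0 < segProb P X q n j) :
    ∀ k, 1 ≤ k → k ≤ n → ∀ t ∈ Set.Ioc (q (k - 1)) (q k),
      (ftilde P X q n t - ∫ ω, min t (X ω) ∂P
          = segProb P X q n k *
            (min t (segMean P X q n k)
              - (∫ ω in {ω | X ω ∈ seg q n k}, min t (X ω) ∂P) / segProb P X q n k)) ∧
        0 ≤ segProb P X q n k *
            (min t (segMean P X q n k)
              - (∫ ω in {ω | X ω ∈ seg q n k}, min t (X ω) ∂P) / segProb P X q n k) :=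
  gap_localizes_general P X hX n q hmono
end

section
/- Let ε > 0 and M > 0. Suppose that for every j ∈ {1, …, n−1} the right endpoint b_j lies in S ∩ (a, b), and there exists a next support point x'_j ∈ S with b_j < x'_j ≤ b, (b_j, x'_j) ∩ S = ∅, and (p_j + P(X = x'_j)) · (x'_j − a_j) > 4Mε. Then, with P = P(X ∈ (a, b]), the number of intervals is bounded by n ≤ ((1 + P)/(2√M)) · √((b − a)/ε) + 1 ≤ (1/√M) · √((b − a)/ε) + 1. -/
open MeasureTheory

set_option maxHeartbeats 1000000

/-- Let `X` be a discrete random variable with finite support `S`,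
`ε > 0`, `M > 0`, and let `(I_1,…,I_n)` with `I_j = (q (j−1), q j]` be a partition of
`(a, b]` into consecutive half-open intervals. Suppose for every `j ∈ {1,…,n−1}` the
right endpoint `b_j = q j` lies in `S ∩ (a, b)` and there is a next support point
`x' ∈ S` with `b_j < x' ≤ b`, `(b_j, x') ∩ S = ∅` and
`(p_j + P(X = x')) (x' − a_j) > 4Mε`. Then, with `P = P(X ∈ (a,b])`,
`n ≤ ((1 + P)/(2√M)) √((b − a)/ε) + 1 ≤ (1/√M) √((b − a)/ε) + 1`. -/
theorem breakpoint_upper_bound_discrete {Ω : Type*} [MeasurableSpace Ω]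
    (P : Measure Ω) [IsProbabilityMeasure P]
    (X : Ω → ℝ) (hX : Integrable X P)
    (S : Finset ℝ) (hS : ∀ ω, X ω ∈ S)
    (a b : ℝ) (hab : a < b) (n : ℕ) (hn : 1 ≤ n)
    (q : ℕ → ℝ) (hq0 : q 0 = a) (hqn : q n = b)
    (hmono : ∀ i < n, q i < q (i + 1))
    (ε M : ℝ) (hε : 0 < ε) (hM : 0 < M)
    (hbp : ∀ j, 1 ≤ j → j ≤ n - 1 → q j ∈ S ∧ a < q j ∧ q j < b)
    (hnext : ∀ j, 1 ≤ j → j ≤ n - 1 →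
      ∃ x' ∈ S, q j < x' ∧ x' ≤ b ∧
        (∀ y ∈ S, q j < y → y < x' → False) ∧
        ((P {ω | X ω ∈ Set.Ioc (q (j - 1)) (q j)}).toReal
            + (P {ω | X ω = x'}).toReal) * (x' - q (j - 1)) > 4 * M * ε) :
    (n : ℝ) ≤ (1 + (P {ω | X ω ∈ Set.Ioc a b}).toReal) / (2 * Real.sqrt M)
          * Real.sqrt ((b - a) / ε) + 1 ∧
      (1 + (P {ω | X ω ∈ Set.Ioc a b}).toReal) / (2 * Real.sqrt M)
          * Real.sqrt ((b - a) / ε) + 1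
        ≤ 1 / Real.sqrt M * Real.sqrt ((b - a) / ε) + 1 := by
  have hsM : (0:ℝ) < Real.sqrt M := Real.sqrt_pos.mpr hM
  have hsε : (0:ℝ) < Real.sqrt ε := Real.sqrt_pos.mpr hε
  set s : ℝ := Real.sqrt ((b - a) / ε) with hs
  have hs0 : 0 ≤ s := Real.sqrt_nonneg _
  set Pt : ℝ := (P {ω | X ω ∈ Set.Ioc a b}).toReal with hPtdef
  have hPt0 : 0 ≤ Pt := ENNReal.toReal_nonneg
  have hPt1 : Pt ≤ 1 := by
    have h1 : P {ω | X ω ∈ Set.Ioc a b} ≤ 1 := prob_le_one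
    calc Pt ≤ (1 : ENNReal).toReal := ENNReal.toReal_mono ENNReal.one_ne_top h1
      _ = 1 := ENNReal.toReal_one
  constructor
  · -- main inequality
    rcases Nat.lt_or_ge n 2 with hn2 | hn2
    · -- n = 1
      have : n = 1 := by omega
      subst this
      have : 0 ≤ (1 + Pt) / (2 * Real.sqrt M) * s := by positivity
      push_cast
      linarith
    · -- n ≥ 2
      -- measurable modification of X
      obtain ⟨Y, hYm, hXY⟩ := hX.aemeasurable
      have hPeq : ∀ A : Set ℝ, P {ω | X ω ∈ A} = P {ω | Y ω ∈ A} := by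
        intro A
        apply measure_congr
        filter_upwards [hXY] with ω h
        show (X ω ∈ A) = (Y ω ∈ A)
        rw [h]
      have hqle : ∀ i j, i ≤ j → j ≤ n → q i ≤ q j := by
        intro i j hij hjn
        induction j with
        | zero =>
          have : i = 0 := by omega
          simp [this]
        | succ j ih =>
          rcases Nat.lt_or_ge i (j+1) with h | h
          · exact le_trans (ih (by omega) (by omega)) (hmono j (by omega)).le
          · have : i = j + 1 := by omega
            simp [this]
      set R : ℕ → ℝ := fun k => (P {ω | X ω ∈ Set.Ioc (q k) (q (k+1))}).toReal with hRdef
      have hR0 : ∀ k, 0 ≤ R k := fun k => ENNReal.toReal_nonneg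
      -- per-index key inequality
      have hkey : ∀ i, i < n - 1 → 4 * M * ε < (R i + R (i+1)) * (q (i+2) - q i) := by
        intro i hi
        obtain ⟨x', hx'S, hx'1, hx'2, hgap, hineq⟩ := hnext (i+1) (by omega) (by omega)
        simp only [Nat.add_sub_cancel] at hineq
        have hx'le : x' ≤ q (i+2) := by
          by_cases hcase : i + 1 = n - 1
          · have hb2 : q (i+2) = b := by rw [← hqn]; congr 1; omega
            rw [hb2]; exact hx'2
          · have h2 : q (i+2) ∈ S := (hbp (i+2) (by omega) (by omega)).1
            by_contra hlt
            push_neg at hlt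
            exact hgap (q (i+2)) h2 (hmono (i+1) (by omega)) hlt
        have hsub : {ω | X ω = x'} ⊆ {ω | X ω ∈ Set.Ioc (q (i+1)) (q (i+2))} := by
          intro ω hω
          simp only [Set.mem_setOf_eq] at *
          rw [hω]
          exact ⟨hx'1, hx'le⟩
        have hb1 : (P {ω | X ω = x'}).toReal ≤ R (i+1) :=
          ENNReal.toReal_mono (measure_ne_top _ _) (measure_mono hsub)
        have hℓ : 0 < x' - q i := by
          have := hmono i (by omega)
          linarith
        have hℓ2 : x' - q i ≤ q (i+2) - q i := by linarith
        calc 4 * M * ε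
            < ((P {ω | X ω ∈ Set.Ioc (q i) (q (i+1))}).toReal
                + (P {ω | X ω = x'}).toReal) * (x' - q i) := hineq
          _ ≤ (R i + R (i+1)) * (q (i+2) - q i) := by
              apply mul_le_mul (add_le_add le_rfl hb1) hℓ2 hℓ.le
              exact add_nonneg (hR0 i) (hR0 (i+1))
      -- partition sum of probabilities
      have hsum : ∀ m, m ≤ n →
          ∑ k ∈ Finset.range m, R k = (P {ω | X ω ∈ Set.Ioc a (q m)}).toReal := by
        intro m
        induction m with
        | zero =>
          intro _
          simp [hq0, Set.Ioc_self]
        | succ m ih =>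
          intro hm
          rw [Finset.sum_range_succ, ih (by omega)]
          have hle1 : a ≤ q m := by rw [← hq0]; exact hqle 0 m (by omega) (by omega)
          have hle2 : q m ≤ q (m+1) := (hmono m (by omega)).le
          have hRm : R m = (P {ω | Y ω ∈ Set.Ioc (q m) (q (m+1))}).toReal := by
            rw [hRdef]; exact congrArg ENNReal.toReal (hPeq _)
          rw [hPeq, hPeq (Set.Ioc a (q (m+1))), hRm]
          have hU : {ω | Y ω ∈ Set.Ioc a (q (m+1))}
              = {ω | Y ω ∈ Set.Ioc a (q m)} ∪ {ω | Y ω ∈ Set.Ioc (q m) (q (m+1))} := by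
            ext ω
            simp only [Set.mem_setOf_eq, Set.mem_union,
              ← Set.Ioc_union_Ioc_eq_Ioc hle1 hle2, Set.mem_union]
          have hdisj : Disjoint {ω | Y ω ∈ Set.Ioc a (q m)}
              {ω | Y ω ∈ Set.Ioc (q m) (q (m+1))} := by
            rw [Set.disjoint_left]
            intro ω h1 h2
            exact absurd h1.2 (not_le.mpr h2.1)
          have hmeas : MeasurableSet {ω | Y ω ∈ Set.Ioc (q m) (q (m+1))} :=
            hYm measurableSet_Ioc
          rw [hU, measure_union hdisj hmeas,
            ENNReal.toReal_add (measure_ne_top _ _) (measure_ne_top _ _)]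
      have hsumn : ∑ k ∈ Finset.range n, R k = Pt := by
        rw [hsum n le_rfl, hqn]
      -- the two shifted sums are ≤ Pt
      have hsA : ∑ i ∈ Finset.range (n-1), R i ≤ Pt := by
        rw [← hsumn]
        apply Finset.sum_le_sum_of_subset_of_nonneg
        · exact Finset.range_subset_range.mpr (by omega)
        · intro k _ _; exact hR0 k
      have hsB : ∑ i ∈ Finset.range (n-1), R (i+1) ≤ Pt := by
        have h := Finset.sum_range_succ' R (n-1)
        rw [show n - 1 + 1 = n from by omega] at h
        rw [← hsumn, h]
        linarith [hR0 0]
      -- telescoping length sum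
      have htel : ∑ i ∈ Finset.range (n-1), (q (i+2) - q i) ≤ 2 * (b - a) := by
        have h1 : ∑ i ∈ Finset.range (n-1), (q (i+2) - q (i+1)) = q n - q 1 := by
          have := Finset.sum_range_sub (fun i => q (i+1)) (n-1)
          simpa [show n - 1 + 1 = n from by omega] using this
        have h2 : ∑ i ∈ Finset.range (n-1), (q (i+1) - q i) = q (n-1) - q 0 :=
          Finset.sum_range_sub q (n-1)
        have h3 : ∑ i ∈ Finset.range (n-1), (q (i+2) - q i)
            = (∑ i ∈ Finset.range (n-1), (q (i+2) - q (i+1)))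
              + ∑ i ∈ Finset.range (n-1), (q (i+1) - q i) := by
          rw [← Finset.sum_add_distrib]
          exact Finset.sum_congr rfl (fun i _ => by ring)
        have ha1 : a ≤ q 1 := by rw [← hq0]; exact (hmono 0 (by omega)).le
        have hb1 : q (n-1) ≤ b := by rw [← hqn]; exact hqle (n-1) n (by omega) le_rfl
        rw [h3, h1, h2, hq0, hqn]
        linarith
      -- positivity of Pt
      have hR01 : R 0 + R 1 ≤ 2 * Pt := by
        have hk0 : ∀ k, k < n → R k ≤ Pt := by
          intro k hk
          apply ENNReal.toReal_mono (measure_ne_top _ _)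
          apply measure_mono
          intro ω hω
          simp only [Set.mem_setOf_eq, Set.mem_Ioc] at *
          constructor
          · calc a = q 0 := hq0.symm
              _ ≤ q k := hqle 0 k (by omega) (by omega)
              _ < X ω := hω.1
          · calc X ω ≤ q (k+1) := hω.2
              _ ≤ q n := hqle (k+1) n (by omega) le_rfl
              _ = b := hqn
        linarith [hk0 0 (by omega), hk0 1 (by omega)]
      have hPtpos : 0 < Pt := by
        have hk := hkey 0 (by omega)
        have hq20 : q 2 - q 0 ≤ b - a := by
          rw [hq0]
          have : q 2 ≤ b := by rw [← hqn]; exact hqle 2 n (by omega) le_rfl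
          have : a ≤ q 0 := hq0.ge
          linarith [hqn ▸ hqle 2 n (by omega) le_rfl, hq0.ge]
        have hq20' : 0 ≤ q 2 - q 0 := by
          have h01 := hmono 0 (by omega)
          have h12 := hmono 1 (by omega)
          linarith
        have hmul : (R 0 + R 1) * (q 2 - q 0) ≤ (2 * Pt) * (b - a) :=
          mul_le_mul hR01 hq20 hq20' (by linarith)
        nlinarith
      set t : ℝ := Real.sqrt (b - a) / Real.sqrt Pt with htdef
      have hsPt : (0:ℝ) < Real.sqrt Pt := Real.sqrt_pos.mpr hPtpos
      have hsba : (0:ℝ) < Real.sqrt (b - a) := Real.sqrt_pos.mpr (by linarith)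
      have ht : 0 < t := div_pos hsba hsPt
      -- per-term AM-GM form
      have hterm : ∀ i ∈ Finset.range (n-1),
          4 * Real.sqrt M * Real.sqrt ε * t
            < t^2 * (R i + R (i+1)) + (q (i+2) - q i) := by
        intro i hi
        rw [Finset.mem_range] at hi
        have huv := hkey i hi
        have hu : 0 ≤ R i + R (i+1) := add_nonneg (hR0 i) (hR0 (i+1))
        have hv : 0 < q (i+2) - q i := by
          have h01 := hmono i (by omega)
          have h12 := hmono (i+1) (by omega)
          linarith
        set u := R i + R (i+1)
        set v := q (i+2) - q i
        have hrhs : 0 ≤ t^2 * u + v := by positivity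
        have hsq : (4 * Real.sqrt M * Real.sqrt ε * t)^2 < (t^2 * u + v)^2 := by
          have hc : (Real.sqrt M * Real.sqrt ε)^2 * t^2 = M * ε * t^2 := by
            rw [mul_pow, Real.sq_sqrt hM.le, Real.sq_sqrt hε.le]
          nlinarith [sq_nonneg (t^2 * u - v), mul_lt_mul_of_pos_left huv
            (by positivity : (0:ℝ) < 4 * t^2), hc]
        exact lt_of_pow_lt_pow_left₀ 2 hrhs hsq
      -- sum up
      have hne : (Finset.range (n-1)).Nonempty := by
        rw [Finset.nonempty_range_iff]; omega
      have hsum1 : ∑ _i ∈ Finset.range (n-1), (4 * Real.sqrt M * Real.sqrt ε * t)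
          < ∑ i ∈ Finset.range (n-1),
              (t^2 * (R i + R (i+1)) + (q (i+2) - q i)) :=
        Finset.sum_lt_sum_of_nonempty hne hterm
      rw [Finset.sum_const, Finset.card_range, nsmul_eq_mul] at hsum1
      have hsum2 : ∑ i ∈ Finset.range (n-1),
          (t^2 * (R i + R (i+1)) + (q (i+2) - q i))
            ≤ t^2 * (2 * Pt) + 2 * (b - a) := by
        rw [Finset.sum_add_distrib, ← Finset.mul_sum]
        have h4 : ∑ i ∈ Finset.range (n-1), (R i + R (i+1))
            = (∑ i ∈ Finset.range (n-1), R i) + ∑ i ∈ Finset.range (n-1), R (i+1) :=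
          Finset.sum_add_distrib
        rw [h4]
        nlinarith [sq_nonneg t, htel, hsA, hsB]
      have ht2 : t^2 * Pt = b - a := by
        rw [htdef, div_pow, Real.sq_sqrt (by linarith : (0:ℝ) ≤ b - a),
          Real.sq_sqrt hPt0]
        field_simp
      have hmain : ((n:ℝ) - 1) * (4 * Real.sqrt M * Real.sqrt ε * t) < 4 * (b - a) := by
        have hcast : ((n - 1 : ℕ) : ℝ) = (n : ℝ) - 1 := by
          push_cast [Nat.cast_sub (by omega : 1 ≤ n)]; ring
        rw [← hcast]
        calc ((n - 1 : ℕ) : ℝ) * (4 * Real.sqrt M * Real.sqrt ε * t)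
            < t^2 * (2 * Pt) + 2 * (b - a) := lt_of_lt_of_le hsum1 hsum2
          _ = 4 * (b - a) := by nlinarith [ht2]
      -- convert b - a into sqrt form
      have heq : Real.sqrt (b - a) * Real.sqrt Pt * t = b - a := by
        rw [htdef]
        field_simp
        nlinarith [Real.mul_self_sqrt (by linarith : (0:ℝ) ≤ b - a)]
      have hfin : ((n:ℝ) - 1) * (Real.sqrt M * Real.sqrt ε)
          < Real.sqrt (b - a) * Real.sqrt Pt := by
        rw [← heq] at hmain
        nlinarith [hmain, ht]
      have hAM : Real.sqrt Pt ≤ (1 + Pt) / 2 := by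
        nlinarith [sq_nonneg (Real.sqrt Pt - 1), Real.sq_sqrt hPt0]
      have h5 : ((n:ℝ) - 1) * (Real.sqrt M * Real.sqrt ε)
          ≤ Real.sqrt (b - a) * ((1 + Pt) / 2) := by
        have : Real.sqrt (b - a) * Real.sqrt Pt ≤ Real.sqrt (b - a) * ((1 + Pt) / 2) :=
          mul_le_mul_of_nonneg_left hAM hsba.le
        linarith
      have hsval : s = Real.sqrt (b - a) / Real.sqrt ε := by
        rw [hs, Real.sqrt_div (by linarith : (0:ℝ) ≤ b - a)]
      have hrhs : (1 + Pt) / (2 * Real.sqrt M) * s * (Real.sqrt M * Real.sqrt ε)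
          = Real.sqrt (b - a) * ((1 + Pt) / 2) := by
        rw [hsval]
        field_simp
      have h6 : ((n:ℝ) - 1) ≤ (1 + Pt) / (2 * Real.sqrt M) * s := by
        have hpos : 0 < Real.sqrt M * Real.sqrt ε := by positivity
        have := h5.trans_eq hrhs.symm
        exact le_of_mul_le_mul_right this hpos
      linarith
  · have hle : (1 + Pt) / (2 * Real.sqrt M) ≤ 1 / Real.sqrt M := by
      rw [div_le_div_iff₀ (by positivity) hsM]
      nlinarith [mul_nonneg (sub_nonneg.mpr hPt1) hsM.le]
    nlinarith [mul_le_mul_of_nonneg_right hle hs0]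
end

section
/- Suppose (I_1, …, I_n) with I_j = (a_j, b_j] is the greedy partition of (a, b]: a_1 = a, a_{j+1} = b_j, b_n = b, each P(X ∈ I_j) > 0, Δ_X(I_j) ≤ ε for all j ∈ {1, …, n}, b_j ∈ S for j ∈ {1, …, n−1}, and for every j ∈ {1, …, n−1} and every y ∈ S with b_j < y ≤ b one has Δ_X((a_j, y]) > ε. Then for any m and any partition (I*_1, …, I*_m) of (a, b] into consecutive half-open intervals I*_j = (a*_j, b*_j] with a*_1 = a, b*_m = b, b*_j ∈ S for j ∈ {1, …, m−1}, P(X ∈ I*_j) > 0 and Δ_X(I*_j) ≤ ε for all j, one has m ≥ n. In other words, the greedy partition minimizes the number of intervals subject to the per-interval error constraint. -/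
/-!
Only the monotonicity of `Delta` under inclusion of intervals matters. Writing
`A = {X ∈ (u, v]}` and `m` for the conditional mean, `Delta (u, v] = ∫_A (m - X)⁺ = ∫_A (X - m)⁺`,
the two deviations being equal because `∫_A (m - X) = 0`. Extending the interval to the right adds
mass above `m`, which raises the mean, so the first form grows; extending it to the left is the
mirror image under `X ↦ -X`, handled by the second form.

Given monotonicity, the greedy partition stays ahead: `r j ≤ q j` for every `j ≤ m` with `j < n`.
Were `q (j + 1) < r (j + 1)`, some point `y` of `S` would lie in `(q (j + 1), r (j + 1)]`, and
`(q j, y] ⊆ (r j, r (j + 1)]` would have error at most `ε`, contradicting the maximality of the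
greedy interval. If `m < n`, then `b = r m ≤ q m < q n = b`.
-/

open MeasureTheory

/-- `μ_{(u,v]} = E[X | X ∈ (u, v]]`. -/
noncomputable def intervalMean {Ω : Type*} [MeasurableSpace Ω]
    (P : Measure Ω) (X : Ω → ℝ) (u v : ℝ) : ℝ :=
  (∫ ω in {ω | X ω ∈ Set.Ioc u v}, X ω ∂P) / (P {ω | X ω ∈ Set.Ioc u v}).toReal

/-- Per-interval approximation error
`Δ_X((u,v]) = E[1_{u < X ≤ μ_{(u,v]}} (μ_{(u,v]} − X)]`. -/
noncomputable def Delta {Ω : Type*} [MeasurableSpace Ω]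
    (P : Measure Ω) (X : Ω → ℝ) (u v : ℝ) : ℝ :=
  ∫ ω in {ω | X ω ∈ Set.Ioc u (intervalMean P X u v)},
    (intervalMean P X u v - X ω) ∂P

open Set

section SetMean

variable {Ω : Type*} [MeasurableSpace Ω] {P : Measure Ω} {X : Ω → ℝ} {A A' : Set Ω}

noncomputable def setMean (P : Measure Ω) (X : Ω → ℝ) (A : Set Ω) : ℝ :=
  (∫ ω in A, X ω ∂P) / P.real A

noncomputable def lowerDeviation (P : Measure Ω) (X : Ω → ℝ) (A : Set Ω) : ℝ :=
  ∫ ω in A, max (setMean P X A - X ω) 0 ∂P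

lemma setMean_neg : setMean P (-X) A = -setMean P X A := by
  simp only [setMean, Pi.neg_apply, integral_neg, neg_div]

variable [IsFiniteMeasure P]

lemma MeasureTheory.IntegrableOn.max_const_sub_zero (hX : IntegrableOn X A P) (c : ℝ) :
    IntegrableOn (fun ω => max (c - X ω) 0) A P :=
  ((integrable_const c).sub hX).pos_part

lemma setIntegral_setMean_sub (hX : IntegrableOn X A P) (hA : P A ≠ 0) :
    ∫ ω in A, (setMean P X A - X ω) ∂P = 0 := by
  have hPA : P.real A ≠ 0 := (ENNReal.toReal_pos hA (measure_ne_top P A)).ne'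
  rw [integral_sub (integrable_const _) hX, setIntegral_const, smul_eq_mul, setMean,
    mul_div_cancel₀ _ hPA, sub_self]

lemma setMean_le_of_forall_le (hA : NullMeasurableSet A P) (hX : IntegrableOn X A P)
    (hA0 : P A ≠ 0) {c : ℝ} (h : ∀ ω ∈ A, X ω ≤ c) : setMean P X A ≤ c := by
  have hPA : 0 < P.real A := ENNReal.toReal_pos hA0 (measure_ne_top P A)
  rw [setMean, div_le_iff₀ hPA, mul_comm, ← smul_eq_mul, ← setIntegral_const]
  exact setIntegral_mono_on₀ hX integrableOn_const hA h

lemma le_setMean_of_forall_le (hA : NullMeasurableSet A P) (hX : IntegrableOn X A P)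
    (hA0 : P A ≠ 0) {c : ℝ} (h : ∀ ω ∈ A, c ≤ X ω) : c ≤ setMean P X A := by
  have := setMean_le_of_forall_le hA hX.neg hA0 (c := -c) fun ω hω => neg_le_neg (h ω hω)
  rwa [setMean_neg, neg_le_neg_iff] at this

lemma lowerDeviation_neg (hX : IntegrableOn X A P) (hA : P A ≠ 0) :
    lowerDeviation P (-X) A = lowerDeviation P X A := by
  set m := setMean P X A
  have hsplit : ∫ ω in A, max (m - X ω) 0 ∂P - ∫ ω in A, max (X ω - m) 0 ∂P = 0 := by
    have hint : IntegrableOn (fun ω => max (X ω - m) 0) A P :=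
      (hX.sub (integrable_const m)).pos_part
    rw [← integral_sub (hX.max_const_sub_zero m) hint]
    simp only [← neg_sub m, max_zero_sub_eq_self]
    exact setIntegral_setMean_sub hX hA
  simp only [lowerDeviation, setMean_neg, Pi.neg_apply, neg_sub_neg]
  linarith

section Subset

variable (hA'A : A' ⊆ A) (hA : NullMeasurableSet A P) (hA' : NullMeasurableSet A' P)
  (hX : IntegrableOn X A P) (hA'0 : P A' ≠ 0) (habove : ∀ ω ∈ A \ A', setMean P X A' ≤ X ω)
include hA'A hA hA' hX hA'0 habove

lemma setMean_le_setMean_of_subset : setMean P X A' ≤ setMean P X A := by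
  set m' := setMean P X A'
  have hA0 : P A ≠ 0 := fun h => hA'0 (measure_mono_null hA'A h)
  have hPA : 0 < P.real A := ENNReal.toReal_pos hA0 (measure_ne_top P A)
  have hint : IntegrableOn (fun ω => m' - X ω) A P := (integrable_const m').sub hX
  have hrest : ∫ ω in A \ A', (m' - X ω) ∂P ≤ 0 :=
    setIntegral_nonpos_of_ae_restrict <| (ae_restrict_iff'₀ (hA.diff hA')).2 <|
      Filter.Eventually.of_forall fun ω hω => sub_nonpos.2 (habove ω hω)
  have hsum : ∫ ω in A, (m' - X ω) ∂P ≤ 0 := by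
    rw [setIntegral_sdiff₀ hA' hint hA'A, setIntegral_setMean_sub (hX.mono_set hA'A) hA'0]
      at hrest
    linarith
  rw [integral_sub (integrable_const m') hX, setIntegral_const, smul_eq_mul] at hsum
  rw [setMean, le_div_iff₀ hPA]
  linarith

lemma lowerDeviation_mono_of_subset : lowerDeviation P X A' ≤ lowerDeviation P X A := by
  have hmean := setMean_le_setMean_of_subset hA'A hA hA' hX hA'0 habove
  calc lowerDeviation P X A'
      ≤ ∫ ω in A', max (setMean P X A - X ω) 0 ∂P :=
        setIntegral_mono_on₀ ((hX.mono_set hA'A).max_const_sub_zero _)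
          ((hX.mono_set hA'A).max_const_sub_zero _) hA'
          fun ω _ => max_le_max (by linarith) le_rfl
    _ ≤ lowerDeviation P X A :=
        setIntegral_mono_set (hX.max_const_sub_zero _)
          (Filter.Eventually.of_forall fun _ => le_max_right _ _) hA'A.eventuallyLE

end Subset

end SetMean

section Delta

variable {Ω : Type*} [MeasurableSpace Ω] {P : Measure Ω} {X : Ω → ℝ} {u u' v v' : ℝ}

lemma intervalMean_eq_setMean (u v : ℝ) :
    intervalMean P X u v = setMean P X {ω | X ω ∈ Ioc u v} := rfl

lemma nullMeasurableSet_mem_Ioc (hX : AEMeasurable X P) (u v : ℝ) :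
    NullMeasurableSet {ω | X ω ∈ Ioc u v} P :=
  hX.nullMeasurableSet_preimage measurableSet_Ioc

lemma measure_mem_Ioc_ne_zero_of_le (hu : u ≤ u') (hv : v' ≤ v)
    (h : P {ω | X ω ∈ Ioc u' v'} ≠ 0) : P {ω | X ω ∈ Ioc u v} ≠ 0 :=
  fun h0 => h (measure_mono_null (fun _ hω => Ioc_subset_Ioc hu hv hω) h0)

variable [IsFiniteMeasure P] (hX : Integrable X P)
include hX

lemma intervalMean_mem_Icc (h : P {ω | X ω ∈ Ioc u v} ≠ 0) :
    intervalMean P X u v ∈ Icc u v :=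
  ⟨le_setMean_of_forall_le (nullMeasurableSet_mem_Ioc hX.aemeasurable u v) hX.integrableOn h
      fun _ hω => hω.1.le,
    setMean_le_of_forall_le (nullMeasurableSet_mem_Ioc hX.aemeasurable u v) hX.integrableOn h
      fun _ hω => hω.2⟩

lemma Delta_eq_lowerDeviation (h : P {ω | X ω ∈ Ioc u v} ≠ 0) :
    Delta P X u v = lowerDeviation P X {ω | X ω ∈ Ioc u v} := by
  have hmv := (intervalMean_mem_Icc hX h).2
  rw [Delta, lowerDeviation, ← intervalMean_eq_setMean]
  set m := intervalMean P X u v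
  have hsub : {ω | X ω ∈ Ioc u m} ⊆ {ω | X ω ∈ Ioc u v} :=
    fun _ hω => ⟨hω.1, hω.2.trans hmv⟩
  have hzero : ∀ ω ∈ {ω | X ω ∈ Ioc u v} \ {ω | X ω ∈ Ioc u m}, max (m - X ω) 0 = 0 :=
    fun ω hω => max_eq_right (sub_nonpos.2 (not_le.1 fun hle => hω.2 ⟨hω.1.1, hle⟩).le)
  rw [setIntegral_eq_of_subset_of_ae_sdiff_eq_zero
    (nullMeasurableSet_mem_Ioc hX.aemeasurable u v) hsub (Filter.Eventually.of_forall hzero)]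
  exact (setIntegral_congr_fun₀ (nullMeasurableSet_mem_Ioc hX.aemeasurable u m)
    fun ω hω => max_eq_left (sub_nonneg.2 hω.2)).symm

lemma Delta_mono_right (hv : v' ≤ v) (h : P {ω | X ω ∈ Ioc u v'} ≠ 0) :
    Delta P X u v' ≤ Delta P X u v := by
  rw [Delta_eq_lowerDeviation hX h,
    Delta_eq_lowerDeviation hX (measure_mem_Ioc_ne_zero_of_le le_rfl hv h)]
  refine lowerDeviation_mono_of_subset (fun _ hω => Ioc_subset_Ioc_right hv hω)
    (nullMeasurableSet_mem_Ioc hX.aemeasurable u v)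
    (nullMeasurableSet_mem_Ioc hX.aemeasurable u v') hX.integrableOn h fun ω hω => ?_
  have hv'ω : v' < X ω := not_le.1 fun hle => hω.2 ⟨hω.1.1, hle⟩
  exact (intervalMean_mem_Icc hX h).2.trans hv'ω.le

lemma Delta_mono_left (hu : u ≤ u') (h : P {ω | X ω ∈ Ioc u' v} ≠ 0) :
    Delta P X u' v ≤ Delta P X u v := by
  have h0 := measure_mem_Ioc_ne_zero_of_le hu le_rfl h
  rw [Delta_eq_lowerDeviation hX h, Delta_eq_lowerDeviation hX h0,
    ← lowerDeviation_neg hX.integrableOn h, ← lowerDeviation_neg hX.integrableOn h0]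
  refine lowerDeviation_mono_of_subset (fun _ hω => Ioc_subset_Ioc_left hu hω)
    (nullMeasurableSet_mem_Ioc hX.aemeasurable u v)
    (nullMeasurableSet_mem_Ioc hX.aemeasurable u' v) hX.integrableOn.neg h fun ω hω => ?_
  have hωu' : X ω ≤ u' := not_lt.1 fun hlt => hω.2 ⟨hlt, hω.1.2⟩
  rw [setMean_neg, Pi.neg_apply, neg_le_neg_iff]
  exact hωu'.trans (intervalMean_mem_Icc hX h).1

lemma Delta_mono_s13 (hu : u ≤ u') (hv : v' ≤ v) (h : P {ω | X ω ∈ Ioc u' v'} ≠ 0) :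
    Delta P X u' v' ≤ Delta P X u v :=
  (Delta_mono_right hX hv h).trans <|
    Delta_mono_left hX hu (measure_mem_Ioc_ne_zero_of_le le_rfl hv h)

lemma disjoint_Ioc_of_maximal {S : Set ℝ} {b ε : ℝ} (hu : u ≤ u')
    (h : P {ω | X ω ∈ Ioc u' v'} ≠ 0)
    (hmax : ∀ y ∈ S, v' < y → y ≤ b → Delta P X u' y > ε)
    (hvb : v ≤ b) (hε : Delta P X u v ≤ ε) : Disjoint S (Ioc v' v) :=
  disjoint_left.2 fun y hyS hy => (hmax y hyS hy.1 (hy.2.trans hvb)).not_ge <|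
    (Delta_mono_s13 hX hu hy.2 (measure_mem_Ioc_ne_zero_of_le le_rfl hy.1.le h)).trans hε

end Delta

theorem greedy_partition_optimal_general {Ω : Type*} [MeasurableSpace Ω]
    (P : Measure Ω) [IsProbabilityMeasure P]
    (X : Ω → ℝ) (hX : Integrable X P)
    (S : Set ℝ) (hS : ∀ ω, X ω ∈ S)
    (a b : ℝ) (ε : ℝ)
    (n : ℕ)
    (q : ℕ → ℝ) (hq0 : q 0 = a) (hqn : q n = b)
    (hqmono : ∀ i < n, q i < q (i + 1))
    (hqpos : ∀ j, 1 ≤ j → j ≤ n → 0 < P {ω | X ω ∈ Set.Ioc (q (j - 1)) (q j)})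
    (hgreedy : ∀ j, 1 ≤ j → j ≤ n - 1 →
      ∀ y ∈ S, q j < y → y ≤ b → Delta P X (q (j - 1)) y > ε)
    (m : ℕ)
    (r : ℕ → ℝ) (hr0 : r 0 = a) (hrm : r m = b)
    (hrmono : ∀ i < m, r i < r (i + 1))
    (hrS : ∀ j, 1 ≤ j → j ≤ m - 1 → r j ∈ S)
    (hrerr : ∀ j, 1 ≤ j → j ≤ m → Delta P X (r (j - 1)) (r j) ≤ ε) :
    n ≤ m := by
  have hq : StrictMonoOn q (Iic n) := strictMonoOn_Iic_of_lt_succ hqmono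
  have hr : MonotoneOn r (Iic m) := (strictMonoOn_Iic_of_lt_succ hrmono).monotoneOn
  have ahead : ∀ j ≤ m, j < n → r j ≤ q j := by
    intro j
    induction j with
    | zero => simp [hr0, hq0]
    | succ k ih =>
      intro hkm hkn
      by_contra! hlt
      have hpos : P {ω | X ω ∈ Ioc (q k) (q (k + 1))} ≠ 0 := by
        simpa using (hqpos (k + 1) (by omega) hkn.le).ne'
      obtain ⟨y, hyS, hy⟩ : ∃ y ∈ S, y ∈ Ioc (q (k + 1)) (r (k + 1)) := by
        rcases hkm.lt_or_eq with hkm | rfl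
        · exact ⟨r (k + 1), hrS _ (by omega) (by omega), hlt, le_rfl⟩
        · obtain ⟨ω, hω⟩ := nonempty_of_measure_ne_zero (hqpos (k + 1 + 1) (by omega) hkn).ne'
          refine ⟨X ω, hS ω, hω.1, hω.2.trans ?_⟩
          rw [hrm, ← hqn]
          exact hq.monotoneOn (mem_Iic.2 hkn) self_mem_Iic hkn
      have hrb : r (k + 1) ≤ b := hrm ▸ hr (mem_Iic.2 hkm) self_mem_Iic hkm
      have hmax : ∀ y ∈ S, q (k + 1) < y → y ≤ b → Delta P X (q k) y > ε := by
        simpa using hgreedy (k + 1) (by omega) (by omega)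
      have herr : Delta P X (r k) (r (k + 1)) ≤ ε := by
        simpa using hrerr (k + 1) (by omega) hkm
      exact disjoint_left.1
        (disjoint_Ioc_of_maximal hX (ih (by omega) (by omega)) hpos hmax hrb herr) hyS hy
  by_contra! hmn
  have hbq : b ≤ q m := hrm ▸ ahead m le_rfl hmn
  have hqb : q m < b := hqn ▸ hq (mem_Iic.2 hmn.le) self_mem_Iic hmn
  exact hbq.not_gt hqb

/-- Optimality of the greedy partition: if `(I_1,…,I_n)` with
`I_j = (q (j−1), q j]` is the greedy partition of `(a, b]` (each interval has positive
probability and error `≤ ε`, interior endpoints lie in the support `S`, and extending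
any interval to the next support point makes its error exceed `ε`), then every partition
`(I*_1,…,I*_m)` of `(a, b]` into consecutive half-open intervals with interior endpoints
in `S`, positive probabilities, and per-interval error `≤ ε` satisfies `m ≥ n`. -/
theorem greedy_partition_optimal {Ω : Type*} [MeasurableSpace Ω]
    (P : Measure Ω) [IsProbabilityMeasure P]
    (X : Ω → ℝ) (hX : Integrable X P)
    (S : Set ℝ) (hS : ∀ ω, X ω ∈ S)
    (a b : ℝ) (hab : a < b) (ε : ℝ) (hε : 0 < ε)
    (n : ℕ) (hn : 1 ≤ n)
    (q : ℕ → ℝ) (hq0 : q 0 = a) (hqn : q n = b)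
    (hqmono : ∀ i < n, q i < q (i + 1))
    (hqS : ∀ j, 1 ≤ j → j ≤ n - 1 → q j ∈ S)
    (hqpos : ∀ j, 1 ≤ j → j ≤ n → 0 < P {ω | X ω ∈ Set.Ioc (q (j - 1)) (q j)})
    (hqerr : ∀ j, 1 ≤ j → j ≤ n → Delta P X (q (j - 1)) (q j) ≤ ε)
    (hgreedy : ∀ j, 1 ≤ j → j ≤ n - 1 →
      ∀ y ∈ S, q j < y → y ≤ b → Delta P X (q (j - 1)) y > ε)
    (m : ℕ) (hm : 1 ≤ m)
    (r : ℕ → ℝ) (hr0 : r 0 = a) (hrm : r m = b)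
    (hrmono : ∀ i < m, r i < r (i + 1))
    (hrS : ∀ j, 1 ≤ j → j ≤ m - 1 → r j ∈ S)
    (hrpos : ∀ j, 1 ≤ j → j ≤ m → 0 < P {ω | X ω ∈ Set.Ioc (r (j - 1)) (r j)})
    (hrerr : ∀ j, 1 ≤ j → j ≤ m → Delta P X (r (j - 1)) (r j) ≤ ε) :
    n ≤ m :=
  greedy_partition_optimal_general P X hX S hS a b ε n q hq0 hqn hqmono hqpos hgreedy m r hr0 hrm
    hrmono hrS hrerr
end

section
/- The per-interval error is monotone under inclusion of intervals: if (a, b] ⊆ (a', b'] and P(X ∈ (a, b]) > 0, then Δ_X((a', b']) ≥ Δ_X((a, b]). -/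
open MeasureTheory

/-!
Writing `S = {X ∈ (u, v]}` and `μ` for its conditional mean, `∫_S (μ - X) = 0`, so
`Δ_X((u, v]) = ∫_S (μ - X)⁺ = ∫_S (X - μ)⁺`. When `(a, b] ⊆ (a', b']`, the event grows and the
integrands are nonnegative, so it only remains to move the mean: if `μ ≤ μ'` the first formula
is monotone in the mean, otherwise the second one is.
-/

section

variable {Ω : Type*} [MeasurableSpace Ω] {P : Measure Ω} {X : Ω → ℝ} {u v : ℝ}

lemma setIntegral_max_zero_le_setIntegral_max_zero {f g : Ω → ℝ} {s t : Set Ω}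
    (hst : s ⊆ t) (hfg : ∀ ω, f ω ≤ g ω) (hf : IntegrableOn f s P) (hg : IntegrableOn g t P) :
    ∫ ω in s, max (f ω) 0 ∂P ≤ ∫ ω in t, max (g ω) 0 ∂P :=
  calc ∫ ω in s, max (f ω) 0 ∂P
      ≤ ∫ ω in s, max (g ω) 0 ∂P :=
        setIntegral_mono (Integrable.pos_part hf) (Integrable.pos_part (hg.mono_set hst))
          fun ω => max_le_max_right 0 (hfg ω)
    _ ≤ ∫ ω in t, max (g ω) 0 ∂P :=
        setIntegral_mono_set (Integrable.pos_part hg) (ae_of_all _ fun _ => le_max_right _ _)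
          hst.eventuallyLE

lemma setIntegral_Ioc_sub_eq_setIntegral_max_sub (hX : AEMeasurable X P) {c : ℝ} (hcv : c ≤ v) :
    ∫ ω in {ω | X ω ∈ Set.Ioc u c}, (c - X ω) ∂P =
      ∫ ω in {ω | X ω ∈ Set.Ioc u v}, max (c - X ω) 0 ∂P :=
  calc ∫ ω in {ω | X ω ∈ Set.Ioc u c}, (c - X ω) ∂P
      = ∫ ω in {ω | X ω ∈ Set.Ioc u c}, max (c - X ω) 0 ∂P :=
        setIntegral_congr_fun₀ (hX.nullMeasurable measurableSet_Ioc)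
          fun ω hω => (max_eq_left (sub_nonneg.mpr hω.2)).symm
    _ = ∫ ω in {ω | X ω ∈ Set.Ioc u v}, max (c - X ω) 0 ∂P := by
        refine (setIntegral_eq_of_subset_of_ae_sdiff_eq_zero
          (hX.nullMeasurable measurableSet_Ioc) (fun ω hω => ⟨hω.1, hω.2.trans hcv⟩)
          (ae_of_all _ fun ω hω => max_eq_right ?_)).symm
        exact sub_nonpos.mpr (not_le.mp fun hXc => hω.2 ⟨hω.1.1, hXc⟩).le

variable [IsFiniteMeasure P]

lemma setIntegral_intervalMean_sub_eq_zero (hX : Integrable X P)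
    (hS : P {ω | X ω ∈ Set.Ioc u v} ≠ 0) :
    ∫ ω in {ω | X ω ∈ Set.Ioc u v}, (intervalMean P X u v - X ω) ∂P = 0 := by
  have hS_real : (P {ω | X ω ∈ Set.Ioc u v}).toReal ≠ 0 :=
    ENNReal.toReal_ne_zero.mpr ⟨hS, measure_ne_top P _⟩
  rw [integral_sub (integrable_const _).integrableOn hX.integrableOn, setIntegral_const,
    measureReal_def, smul_eq_mul, intervalMean, mul_div_cancel₀ _ hS_real, sub_self]

lemma intervalMean_le (hX : Integrable X P) (hS : P {ω | X ω ∈ Set.Ioc u v} ≠ 0) :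
    intervalMean P X u v ≤ v := by
  have hS_pos : 0 < (P {ω | X ω ∈ Set.Ioc u v}).toReal :=
    ENNReal.toReal_pos hS (measure_ne_top P _)
  have hX_le : ∫ ω in {ω | X ω ∈ Set.Ioc u v}, X ω ∂P ≤ ∫ ω in {ω | X ω ∈ Set.Ioc u v}, v ∂P :=
    setIntegral_mono_ae_restrict hX.integrableOn (integrable_const v).integrableOn
      ((ae_restrict_mem₀ (hX.aemeasurable.nullMeasurable measurableSet_Ioc)).mono
        fun ω hω => hω.2)
  rw [setIntegral_const, measureReal_def, smul_eq_mul] at hX_le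
  rw [intervalMean, div_le_iff₀ hS_pos, mul_comm]
  exact hX_le

lemma Delta_eq_setIntegral_max_intervalMean_sub (hX : Integrable X P)
    (hS : P {ω | X ω ∈ Set.Ioc u v} ≠ 0) :
    Delta P X u v = ∫ ω in {ω | X ω ∈ Set.Ioc u v}, max (intervalMean P X u v - X ω) 0 ∂P :=
  setIntegral_Ioc_sub_eq_setIntegral_max_sub hX.aemeasurable (intervalMean_le hX hS)

lemma Delta_eq_setIntegral_max_sub_intervalMean (hX : Integrable X P)
    (hS : P {ω | X ω ∈ Set.Ioc u v} ≠ 0) :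
    Delta P X u v = ∫ ω in {ω | X ω ∈ Set.Ioc u v}, max (X ω - intervalMean P X u v) 0 ∂P := by
  have hint : Integrable (fun ω => intervalMean P X u v - X ω) P := (integrable_const _).sub hX
  have hint' : Integrable (fun ω => X ω - intervalMean P X u v) P := hX.sub (integrable_const _)
  rw [Delta_eq_setIntegral_max_intervalMean_sub hX hS, ← sub_eq_zero,
    ← integral_sub hint.pos_part.integrableOn hint'.pos_part.integrableOn]
  refine Eq.trans ?_ (setIntegral_intervalMean_sub_eq_zero hX hS)
  congr 1 with ω
  rw [← neg_sub (intervalMean P X u v) (X ω), max_zero_sub_max_neg_zero_eq_self]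

end

theorem Delta_mono_general {Ω : Type*} [MeasurableSpace Ω]
    (P : Measure Ω) [IsProbabilityMeasure P]
    (X : Ω → ℝ) (hX : Integrable X P)
    (a b a' b' : ℝ)
    (hsub : Set.Ioc a b ⊆ Set.Ioc a' b')
    (hpos : 0 < P {ω | X ω ∈ Set.Ioc a b}) :
    Delta P X a b ≤ Delta P X a' b' := by
  have hevent : {ω | X ω ∈ Set.Ioc a b} ⊆ {ω | X ω ∈ Set.Ioc a' b'} := fun ω hω => hsub hω
  have hS : P {ω | X ω ∈ Set.Ioc a b} ≠ 0 := hpos.ne'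
  have hS' : P {ω | X ω ∈ Set.Ioc a' b'} ≠ 0 := fun h => hS (measure_mono_null hevent h)
  have hint : ∀ c : ℝ, Integrable (fun ω => c - X ω) P := fun c => (integrable_const c).sub hX
  have hint' : ∀ c : ℝ, Integrable (fun ω => X ω - c) P := fun c => hX.sub (integrable_const c)
  rcases le_total (intervalMean P X a b) (intervalMean P X a' b') with hmean | hmean
  · rw [Delta_eq_setIntegral_max_intervalMean_sub hX hS,
      Delta_eq_setIntegral_max_intervalMean_sub hX hS']
    exact setIntegral_max_zero_le_setIntegral_max_zero hevent (fun ω => sub_le_sub_right hmean _)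
      (hint _).integrableOn (hint _).integrableOn
  · rw [Delta_eq_setIntegral_max_sub_intervalMean hX hS,
      Delta_eq_setIntegral_max_sub_intervalMean hX hS']
    exact setIntegral_max_zero_le_setIntegral_max_zero hevent (fun ω => sub_le_sub_left hmean _)
      (hint' _).integrableOn (hint' _).integrableOn

/-- The per-interval error is monotone under inclusion of intervals:
if `(a, b] ⊆ (a', b']` and `P(X ∈ (a, b]) > 0`, then `Δ_X((a', b']) ≥ Δ_X((a, b])`. -/
theorem Delta_mono {Ω : Type*} [MeasurableSpace Ω]
    (P : Measure Ω) [IsProbabilityMeasure P]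
    (X : Ω → ℝ) (hX : Integrable X P)
    (a b a' b' : ℝ) (hab : a < b)
    (hsub : Set.Ioc a b ⊆ Set.Ioc a' b')
    (hpos : 0 < P {ω | X ω ∈ Set.Ioc a b}) :
    Delta P X a b ≤ Delta P X a' b' :=
  Delta_mono_general P X hX a b a' b' hsub hpos
end

section
/- Let N be a positive integer and ε > 0 with ε < W/(2N²), where W = b − a. Let X be the discrete random variable taking each value x_k = a + kW/N (k = 1, …, N) with probability 1/N. Then every half-open interval I = (a', b'] ⊆ (a, b] with P(X ∈ I) > 1/N satisfies Δ_X(I) > ε. -/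
open MeasureTheory

/-! `intervalMean` and `Delta` only depend on the law of `X`, which is uniform on the grid points
`a + k W / N`. An interval of probability `> 1/N` holds at least two grid points, so its
conditional mean lies at least `W / (2N)` above its lowest grid point, and that point alone
contributes `(1/N) · W / (2N)` to `Δ`. -/

open Finset

section Law

variable {Ω : Type*} [MeasurableSpace Ω] {P : Measure Ω} {X : Ω → ℝ}

lemma intervalMean_eq_setAverage_map (hX : AEMeasurable X P) (u v : ℝ) :
    intervalMean P X u v = ⨍ y in Set.Ioc u v, y ∂P.map X := by
  rw [setAverage_eq, map_measureReal_apply_of_aemeasurable hX measurableSet_Ioc, measureReal_def,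
    smul_eq_mul, inv_mul_eq_div, intervalMean]
  congr 1
  exact (setIntegral_map measurableSet_Ioc aestronglyMeasurable_id hX).symm

lemma Delta_eq_setIntegral_map (hX : AEMeasurable X P) (u v : ℝ) :
    Delta P X u v =
      ∫ y in Set.Ioc u (intervalMean P X u v), (intervalMean P X u v - y) ∂P.map X :=
  (setIntegral_map measurableSet_Ioc (by fun_prop) hX).symm

end Law

lemma map_eq_sum_smul_dirac {Ω α ι : Type*} [MeasurableSpace Ω] [MeasurableSpace α]
    [MeasurableSingletonClass α] {P : Measure Ω} {X : Ω → α} (hX : AEMeasurable X P)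
    {F : Finset ι} {x : ι → α} (hx : Set.InjOn x F) (hval : ∀ ω, ∃ k ∈ F, X ω = x k) :
    P.map X = ∑ k ∈ F, P {ω | X ω = x k} • Measure.dirac (x k) := by
  classical
  ext s hs
  have hpre : X ⁻¹' s = ⋃ k ∈ F.filter (x · ∈ s), {ω | X ω = x k} := by
    ext ω
    obtain ⟨k, hk, hXk⟩ := hval ω
    simp only [Set.mem_preimage, Set.mem_iUnion, Set.mem_ofPred_eq, mem_filter, exists_prop]
    exact ⟨fun hω => ⟨k, ⟨hk, hXk ▸ hω⟩, hXk⟩,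
      fun ⟨j, ⟨_, hj⟩, hXj⟩ => hXj ▸ hj⟩
  have hdisj : Set.Pairwise (F.filter (x · ∈ s) : Set ι)
      (Function.onFun (AEDisjoint P) fun k => {ω | X ω = x k}) := by
    intro i hi j hj hij
    refine Disjoint.aedisjoint (Set.disjoint_left.2 fun ω hωi hωj => hij (hx ?_ ?_ ?_))
    · exact (mem_filter.1 hi).1
    · exact (mem_filter.1 hj).1
    · exact hωi.symm.trans hωj
  rw [Measure.map_apply_of_aemeasurable hX hs, hpre,
    measure_biUnion_finset₀ hdisj fun k _ => hX.nullMeasurable (measurableSet_singleton (x k)),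
    Measure.finsetSum_apply, sum_filter]
  refine sum_congr rfl fun k _ => ?_
  rw [Measure.smul_apply, Measure.dirac_apply' _ hs, smul_eq_mul]
  split_ifs with h <;> simp [h]

lemma add_half_le_sum_div_card {ι : Type*} {K : Finset ι} {x : ι → ℝ} {p : ι} {h : ℝ}
    (hh : 0 ≤ h) (hK : 2 ≤ #K) (hp : p ∈ K)
    (hgap : ∀ k ∈ K, k ≠ p → x p + h ≤ x k) :
    x p + h / 2 ≤ (∑ k ∈ K, x k) / #K := by
  classical
  have hK' : (2 : ℝ) ≤ #K := by exact_mod_cast hK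
  have hrest : (#K - 1 : ℝ) * (x p + h) ≤ ∑ k ∈ K.erase p, x k := by
    have := card_nsmul_le_sum (K.erase p) x (x p + h)
      fun k hk => hgap k (mem_of_mem_erase hk) (ne_of_mem_erase hk)
    rwa [card_erase_of_mem hp, nsmul_eq_mul, Nat.cast_sub (by omega), Nat.cast_one] at this
  rw [le_div_iff₀ (by positivity), ← add_sum_erase K x hp]
  -- `(#K - 1) * h ≥ #K * h / 2` as `#K ≥ 2`
  nlinarith [mul_nonneg (sub_nonneg.2 hK') hh]

section UniformAtoms

variable {ι : Type*} (F : Finset ι) (x : ι → ℝ) {c : ENNReal}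

lemma measureReal_sum_smul_dirac {s : Set ℝ} [DecidablePred (x · ∈ s)]
    (hs : MeasurableSet s) :
    (∑ k ∈ F, c • Measure.dirac (x k)).real s = #{k ∈ F | x k ∈ s} * c.toReal := by
  simp only [measureReal_def, Measure.finsetSum_apply, Measure.smul_apply,
    Measure.dirac_apply' _ hs, smul_eq_mul, Set.indicator_apply, Pi.one_apply, mul_ite, mul_one,
    mul_zero]
  rw [← sum_filter, sum_const, nsmul_eq_mul, ENNReal.toReal_mul, ENNReal.toReal_natCast]

lemma two_le_card_filter_of_lt_measureReal {s : Set ℝ} [DecidablePred (x · ∈ s)]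
    (hs : MeasurableSet s) (hlt : c.toReal < (∑ k ∈ F, c • Measure.dirac (x k)).real s) :
    2 ≤ #{k ∈ F | x k ∈ s} := by
  rw [measureReal_sum_smul_dirac F x hs] at hlt
  have : (1 : ℝ) < #{k ∈ F | x k ∈ s} :=
    lt_of_mul_lt_mul_right (by rwa [one_mul]) ENNReal.toReal_nonneg
  exact_mod_cast this

lemma setIntegral_sum_smul_dirac (hc : c ≠ ⊤) {s : Set ℝ} [DecidablePred (x · ∈ s)]
    (hs : MeasurableSet s) (f : ℝ → ℝ) :
    ∫ y in s, f y ∂(∑ k ∈ F, c • Measure.dirac (x k)) =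
      c.toReal * ∑ k ∈ F with x k ∈ s, f (x k) := by
  rw [← integral_indicator hs, integral_finsetSum_measure
    fun k _ => (integrable_dirac (by simp)).smul_measure hc, mul_sum, sum_filter]
  simp [integral_smul_measure, integral_dirac, Set.indicator_apply]

lemma setAverage_sum_smul_dirac (hc₀ : c ≠ 0) (hc : c ≠ ⊤) {s : Set ℝ}
    [DecidablePred (x · ∈ s)] (hs : MeasurableSet s) (f : ℝ → ℝ) :
    ⨍ y in s, f y ∂(∑ k ∈ F, c • Measure.dirac (x k)) =
      (∑ k ∈ F with x k ∈ s, f (x k)) / #{k ∈ F | x k ∈ s} := by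
  rw [setAverage_eq, measureReal_sum_smul_dirac F x hs, setIntegral_sum_smul_dirac F x hc hs,
    smul_eq_mul, inv_mul_eq_div, mul_comm (_ : ℝ) c.toReal,
    mul_div_mul_left _ _ (ENNReal.toReal_ne_zero.2 ⟨hc₀, hc⟩)]

lemma mul_half_le_setIntegral_setAverage_sub (hc₀ : c ≠ 0) (hc : c ≠ ⊤) {u v h : ℝ}
    [DecidablePred (x · ∈ Set.Ioc u v)] (hh : 0 ≤ h)
    (hK : 2 ≤ #{k ∈ F | x k ∈ Set.Ioc u v})
    {p : ι} (hp : p ∈ {k ∈ F | x k ∈ Set.Ioc u v})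
    (hgap : ∀ k ∈ {k ∈ F | x k ∈ Set.Ioc u v}, k ≠ p → x p + h ≤ x k) :
    c.toReal * (h / 2) ≤
      ∫ y in Set.Ioc u (⨍ y in Set.Ioc u v, y ∂(∑ k ∈ F, c • Measure.dirac (x k))),
        ((⨍ y in Set.Ioc u v, y ∂(∑ k ∈ F, c • Measure.dirac (x k))) - y)
          ∂(∑ k ∈ F, c • Measure.dirac (x k)) := by
  classical
  have hm :
      x p + h / 2 ≤ ⨍ y in Set.Ioc u v, y ∂(∑ k ∈ F, c • Measure.dirac (x k)) := by
    rw [setAverage_sum_smul_dirac F x hc₀ hc measurableSet_Ioc]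
    exact add_half_le_sum_div_card hh hK hp hgap
  set m := ⨍ y in Set.Ioc u v, y ∂(∑ k ∈ F, c • Measure.dirac (x k))
  obtain ⟨hpF, hpu, -⟩ : p ∈ F ∧ u < x p ∧ x p ≤ v := mem_filter.1 hp
  have hpm : p ∈ {k ∈ F | x k ∈ Set.Ioc u m} := mem_filter.2 ⟨hpF, hpu, by linarith⟩
  rw [setIntegral_sum_smul_dirac F x hc measurableSet_Ioc]
  gcongr
  calc h / 2 ≤ m - x p := by linarith
    _ ≤ _ :=
      single_le_sum (f := (m - x ·)) (fun k hk => sub_nonneg.2 (mem_filter.1 hk).2.2) hpm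

end UniformAtoms

lemma add_mul_div_add_div_le {a w n : ℝ} (hw : 0 ≤ w) (hn : 0 ≤ n) {j k : ℕ} (hjk : j < k) :
    a + j * w / n + w / n ≤ a + k * w / n := by
  have hjk' : (j : ℝ) + 1 ≤ k := by exact_mod_cast hjk
  rw [add_assoc, ← add_div, add_le_add_iff_left]
  gcongr
  nlinarith

theorem lower_bound_discrete_interval_general {Ω : Type*} [MeasurableSpace Ω]
    (P : Measure Ω)
    (X : Ω → ℝ) (hX : Integrable X P)
    (a b : ℝ) (hab : a < b)
    (N : ℕ) (hN : 0 < N)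
    (ε : ℝ) (hεW : ε < (b - a) / (2 * (N : ℝ) ^ 2))
    (hval : ∀ ω, ∃ k ∈ Finset.Icc 1 N, X ω = a + (k : ℝ) * (b - a) / N)
    (hprob : ∀ k ∈ Finset.Icc 1 N,
      P {ω | X ω = a + (k : ℝ) * (b - a) / N} = 1 / (N : ENNReal)) :
    ∀ a' b' : ℝ, a ≤ a' → b' ≤ b →
      1 / (N : ℝ) < (P {ω | X ω ∈ Set.Ioc a' b'}).toReal →
      ε < Delta P X a' b' := by
  intro a' b' _ _ hPI
  set x : ℕ → ℝ := fun k => a + (k : ℝ) * (b - a) / N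
  have hN' : (0 : ℝ) < N := by exact_mod_cast hN
  have hw : 0 < (b - a) / N := div_pos (sub_pos.2 hab) hN'
  have hstep : ∀ j k : ℕ, j < k → x j + (b - a) / N ≤ x k := fun j k =>
    add_mul_div_add_div_le (sub_pos.2 hab).le hN'.le
  have hx : StrictMono x := fun j k hjk => (lt_add_of_pos_right _ hw).trans_le (hstep j k hjk)
  have hc : (1 / N : ENNReal).toReal = 1 / N := by simp
  have hlaw : P.map X = ∑ k ∈ Icc 1 N, (1 / N : ENNReal) • Measure.dirac (x k) := by
    rw [map_eq_sum_smul_dirac hX.aemeasurable hx.injective.injOn hval]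
    exact sum_congr rfl fun k hk => by rw [hprob k hk]
  set K := {k ∈ Icc 1 N | x k ∈ Set.Ioc a' b'}
  have hK : 2 ≤ #K := two_le_card_filter_of_lt_measureReal _ _ measurableSet_Ioc <| by
    rwa [← hlaw, map_measureReal_apply_of_aemeasurable hX.aemeasurable measurableSet_Ioc, hc]
  have hKne : K.Nonempty := card_pos.1 (by omega)
  calc ε < (1 / N : ENNReal).toReal * ((b - a) / N / 2) := by
        rw [hc]; convert hεW using 1; field_simp
    _ ≤ Delta P X a' b' := by
      rw [Delta_eq_setIntegral_map hX.aemeasurable, intervalMean_eq_setAverage_map hX.aemeasurable,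
        hlaw]
      exact mul_half_le_setIntegral_setAverage_sub _ _ (by simp) (by simpa using hN.ne') hw.le hK
        (K.min'_mem hKne) fun k hk hkp => hstep _ _ ((K.min'_le k hk).lt_of_ne' hkp)

/-- Let `N ≥ 1`, `0 < ε < W/(2N²)` with `W = b − a`, and let `X` be
the discrete random variable taking each value `x_k = a + k W/N` (`k = 1,…,N`) with
probability `1/N`. Then every half-open interval `I = (a', b'] ⊆ (a, b]` with
`P(X ∈ I) > 1/N` satisfies `Δ_X(I) > ε`. -/
theorem lower_bound_discrete_interval {Ω : Type*} [MeasurableSpace Ω]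
    (P : Measure Ω) [IsProbabilityMeasure P]
    (X : Ω → ℝ) (hX : Integrable X P)
    (a b : ℝ) (hab : a < b)
    (N : ℕ) (hN : 0 < N)
    (ε : ℝ) (hε : 0 < ε) (hεW : ε < (b - a) / (2 * (N : ℝ) ^ 2))
    (hval : ∀ ω, ∃ k ∈ Finset.Icc 1 N, X ω = a + (k : ℝ) * (b - a) / N)
    (hprob : ∀ k ∈ Finset.Icc 1 N,
      P {ω | X ω = a + (k : ℝ) * (b - a) / N} = 1 / (N : ENNReal)) :
    ∀ a' b' : ℝ, a ≤ a' → b' ≤ b →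
      1 / (N : ℝ) < (P {ω | X ω ∈ Set.Ioc a' b'}).toReal →
      ε < Delta P X a' b' :=
  lower_bound_discrete_interval_general P X hX a b hab N hN ε hεW hval hprob
end

section
/- Let N be a positive integer and ε > 0 with ε < W/(2N²), where W = b − a, and let X be the discrete random variable taking each value x_k = a + kW/N (k = 1, …, N) with probability 1/N. Then every partition (I_1, …, I_m) of (a, b] into consecutive half-open intervals such that Δ_X(I_j) ≤ ε for every j with P(X ∈ I_j) > 0 must satisfy m ≥ N. -/
/-! If `m < N`, two of the `N` atoms `x_k` fall into one cell `(u, v]` of the partition. Let `c₀`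
be the smallest atom in that cell. The other atoms of the cell lie at least `W/N` above `c₀` and
carry at least half of its mass, so the conditional mean `μ` of the cell is at least
`c₀ + W/(2N)`. Since `c₀ ∈ (u, μ]`, the atom `c₀` alone contributes
`P(X = c₀) (μ − c₀) ≥ W/(2N²) > ε` to `Δ_X((u, v])`. -/

open MeasureTheory

open Set
open scoped Finset

theorem Finset.add_half_le_sum_div_card {T : Finset ℝ} {c₀ d : ℝ} (hd : 0 ≤ d)
    (hT : 1 < #T) (hc₀ : c₀ ∈ T) (hmin : ∀ c ∈ T, c₀ ≤ c)
    (hgap : ∀ c ∈ T, ∀ c' ∈ T, c < c' → c + d ≤ c') :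
    c₀ + d / 2 ≤ (∑ c ∈ T, c) / #T := by
  have hgaps : ∑ _c ∈ T.erase c₀, d ≤ ∑ c ∈ T.erase c₀, (c - c₀) :=
    Finset.sum_le_sum fun c hc => by
      have := hgap c₀ hc₀ c (Finset.mem_of_mem_erase hc)
        ((hmin c (Finset.mem_of_mem_erase hc)).lt_of_ne (Finset.ne_of_mem_erase hc).symm)
      linarith
  rw [Finset.sum_sub_distrib, Finset.sum_const, Finset.sum_const, nsmul_eq_mul, nsmul_eq_mul,
    Finset.card_erase_of_mem hc₀, Nat.cast_pred (by omega)] at hgaps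
  have hT' : (2 : ℝ) ≤ #T := by exact_mod_cast hT
  rw [le_div_iff₀ (by linarith), ← Finset.add_sum_erase T _ hc₀]
  nlinarith

section FiniteRange

variable {Ω : Type*} [MeasurableSpace Ω] {P : Measure Ω} {X Y : Ω → ℝ}

theorem intervalMean_congr_ae (h : X =ᵐ[P] Y) (u v : ℝ) :
    intervalMean P X u v = intervalMean P Y u v := by
  have hset : {ω | X ω ∈ Ioc u v} =ᵐ[P] {ω | Y ω ∈ Ioc u v} := h.preimage _
  rw [intervalMean, intervalMean, measure_congr hset, setIntegral_congr_set hset,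
    integral_congr_ae (ae_restrict_of_ae h)]

theorem Delta_congr_ae (h : X =ᵐ[P] Y) (u v : ℝ) : Delta P X u v = Delta P Y u v := by
  have hset (w : ℝ) : {ω | X ω ∈ Ioc u w} =ᵐ[P] {ω | Y ω ∈ Ioc u w} := h.preimage _
  rw [Delta, Delta, intervalMean_congr_ae h, setIntegral_congr_set (hset _)]
  exact integral_congr_ae (ae_restrict_of_ae (h.mono fun ω hω => by simp only [hω]))

variable {s : Finset ℝ}

theorem setOf_mem_ae_eq_biUnion (hs : ∀ᵐ ω ∂P, X ω ∈ s) (S : Set ℝ) [DecidablePred (· ∈ S)] :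
    {ω | X ω ∈ S} =ᵐ[P] ⋃ c ∈ s.filter (· ∈ S), {ω | X ω = c} := by
  rw [Filter.eventuallyEq_set]
  filter_upwards [hs] with ω hω
  simp [hω]

theorem measure_setOf_mem_eq_sum (hX : Measurable X) (hs : ∀ᵐ ω ∂P, X ω ∈ s)
    (S : Set ℝ) [DecidablePred (· ∈ S)] :
    P {ω | X ω ∈ S} = ∑ c ∈ s.filter (· ∈ S), P {ω | X ω = c} := by
  rw [measure_congr (setOf_mem_ae_eq_biUnion hs S)]
  exact measure_biUnion_finset (pairwiseDisjoint_fiber X _)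
    fun c _ => hX (measurableSet_singleton c)

theorem setIntegral_setOf_mem_eq_sum [IsFiniteMeasure P] (hX : Measurable X)
    (hs : ∀ᵐ ω ∂P, X ω ∈ s) (S : Set ℝ) [DecidablePred (· ∈ S)] (g : ℝ → ℝ) :
    ∫ ω in {ω | X ω ∈ S}, g (X ω) ∂P
      = ∑ c ∈ s.filter (· ∈ S), g c * P.real {ω | X ω = c} := by
  have hfiber (c : ℝ) : MeasurableSet {ω | X ω = c} := hX (measurableSet_singleton c)
  have hconst (c : ℝ) : EqOn (fun ω => g (X ω)) (fun _ => g c) {ω | X ω = c} :=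
    fun ω (hω : X ω = c) => congrArg g hω
  rw [setIntegral_congr_set (setOf_mem_ae_eq_biUnion hs S),
    integral_biUnion_finset _ (fun c _ => hfiber c)
      (pairwiseDisjoint_fiber X _)
      fun c _ => (integrableOn_const).congr_fun (hconst c).symm (hfiber c)]
  refine Finset.sum_congr rfl fun c _ => ?_
  rw [setIntegral_congr_fun (hfiber c) (hconst c), setIntegral_const, smul_eq_mul, mul_comm]

variable [IsFiniteMeasure P] {p : ℝ}

theorem intervalMean_eq_sum_div_card (hX : Measurable X) (hs : ∀ᵐ ω ∂P, X ω ∈ s)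
    (hp : p ≠ 0) (hunif : ∀ c ∈ s, P.real {ω | X ω = c} = p) (u v : ℝ) :
    intervalMean P X u v
      = (∑ c ∈ s.filter (· ∈ Ioc u v), c) / #(s.filter (· ∈ Ioc u v)) := by
  set T := s.filter (· ∈ Ioc u v)
  have hunifT : ∀ c ∈ T, P.real {ω | X ω = c} = p :=
    fun c hc => hunif c (Finset.mem_filter.mp hc).1
  have hint : ∫ ω in {ω | X ω ∈ Ioc u v}, X ω ∂P = (∑ c ∈ T, c) * p := by
    rw [setIntegral_setOf_mem_eq_sum hX hs (Ioc u v) fun x => x, Finset.sum_mul]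
    exact Finset.sum_congr rfl fun c hc => by rw [hunifT c hc]
  have hmeas : P.real {ω | X ω ∈ Ioc u v} = #T * p := by
    rw [measureReal_def, measure_setOf_mem_eq_sum hX hs (Ioc u v),
      ENNReal.toReal_sum fun c _ => measure_ne_top P _]
    simp only [← measureReal_def]
    rw [Finset.sum_congr rfl hunifT, Finset.sum_const, nsmul_eq_mul]
  rw [intervalMean, ← measureReal_def, hint, hmeas, mul_div_mul_right _ _ hp]

theorem Delta_eq_sum (hX : Measurable X) (hs : ∀ᵐ ω ∂P, X ω ∈ s)
    (hunif : ∀ c ∈ s, P.real {ω | X ω = c} = p) (u v : ℝ) :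
    Delta P X u v = ∑ c ∈ s.filter (· ∈ Ioc u (intervalMean P X u v)),
      (intervalMean P X u v - c) * p := by
  rw [Delta, setIntegral_setOf_mem_eq_sum hX hs _ (intervalMean P X u v - ·)]
  exact Finset.sum_congr rfl fun c hc => by rw [hunif c (Finset.mem_filter.mp hc).1]

theorem mul_half_le_Delta (hX : Measurable X) (hs : ∀ᵐ ω ∂P, X ω ∈ s) (hp : 0 < p)
    (hunif : ∀ c ∈ s, P.real {ω | X ω = c} = p) {d : ℝ} (hd : 0 ≤ d)
    (hgap : ∀ c ∈ s, ∀ c' ∈ s, c < c' → c + d ≤ c') {u v : ℝ}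
    (hT : 1 < #(s.filter (· ∈ Ioc u v))) :
    p * (d / 2) ≤ Delta P X u v := by
  set T := s.filter (· ∈ Ioc u v)
  have hTne : T.Nonempty := Finset.card_pos.mp (by omega)
  set c₀ := T.min' hTne
  have hc₀ : c₀ ∈ T := T.min'_mem hTne
  have hmean : c₀ + d / 2 ≤ intervalMean P X u v := by
    rw [intervalMean_eq_sum_div_card hX hs hp.ne' hunif]
    exact T.add_half_le_sum_div_card hd hT hc₀ (fun c hc => T.min'_le c hc)
      fun c hc c' hc' => hgap c (Finset.mem_filter.mp hc).1 c' (Finset.mem_filter.mp hc').1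
  set μ := intervalMean P X u v
  have hc₀μ : c₀ ∈ s.filter (· ∈ Ioc u μ) := by
    obtain ⟨hc₀s, hc₀u, -⟩ := Finset.mem_filter.mp hc₀
    exact Finset.mem_filter.mpr ⟨hc₀s, hc₀u, by linarith⟩
  rw [Delta_eq_sum hX hs hunif]
  calc p * (d / 2) ≤ (μ - c₀) * p := by nlinarith
    _ ≤ _ := Finset.single_le_sum (f := fun c => (μ - c) * p)
      (fun c hc => mul_nonneg (sub_nonneg.mpr (Finset.mem_filter.mp hc).2.2) hp.le) hc₀μ

end FiniteRange

theorem exists_mem_Ioc_pred_of_mem_Ioc {r : ℕ → ℝ} {m : ℕ} {t : ℝ} (ht : t ∈ Ioc (r 0) (r m)) :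
    ∃ j ∈ Finset.Icc 1 m, t ∈ Ioc (r (j - 1)) (r j) := by
  have hex : ∃ j, t ≤ r j := ⟨m, ht.2⟩
  have hj0 : Nat.find hex ≠ 0 := fun h => (Nat.find_spec hex).not_gt (h ▸ ht.1)
  refine ⟨Nat.find hex, Finset.mem_Icc.mpr ⟨by omega, Nat.find_min' hex ht.2⟩,
    not_le.mp (Nat.find_min hex (by omega)), Nat.find_spec hex⟩

section Grid

variable {a b : ℝ} {N : ℕ}

theorem gridPoint_mem_Ioc (hab : a < b) {k : ℕ} (hk : k ∈ Finset.Icc 1 N) :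
    a + (k : ℝ) * (b - a) / N ∈ Ioc a b := by
  obtain ⟨hk1, hkN⟩ := Finset.mem_Icc.mp hk
  have hN : (0 : ℝ) < N := by exact_mod_cast hk1.trans hkN
  have hkN' : (k : ℝ) ≤ N := by exact_mod_cast hkN
  have hk1' : (1 : ℝ) ≤ k := by exact_mod_cast hk1
  constructor
  · have : 0 < (k : ℝ) * (b - a) / N := by positivity
    linarith
  · rw [add_comm, ← le_sub_iff_add_le, div_le_iff₀ hN]
    nlinarith

theorem gridPoint_add_le (hab : a ≤ b) {i j : ℕ} (hij : i < j) :
    a + (i : ℝ) * (b - a) / N + (b - a) / N ≤ a + (j : ℝ) * (b - a) / N := by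
  have : (i : ℝ) + 1 ≤ j := by exact_mod_cast hij
  have : ((i : ℝ) + 1) * (b - a) / N ≤ (j : ℝ) * (b - a) / N := by gcongr
  have : ((i : ℝ) + 1) * (b - a) / N = (i : ℝ) * (b - a) / N + (b - a) / N := by ring
  linarith

theorem le_Delta_of_two_gridPoints_mem_Ioc {Ω : Type*} [MeasurableSpace Ω] {P : Measure Ω}
    [IsFiniteMeasure P] {X : Ω → ℝ} (hX : AEMeasurable X P) (hab : a < b)
    (hval : ∀ ω, ∃ k ∈ Finset.Icc 1 N, X ω = a + (k : ℝ) * (b - a) / N)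
    (hprob : ∀ k ∈ Finset.Icc 1 N,
      P {ω | X ω = a + (k : ℝ) * (b - a) / N} = 1 / (N : ENNReal))
    {u v : ℝ} {k₁ k₂ : ℕ} (hk₁ : k₁ ∈ Finset.Icc 1 N) (hk₂ : k₂ ∈ Finset.Icc 1 N)
    (hne : k₁ ≠ k₂) (h₁ : a + (k₁ : ℝ) * (b - a) / N ∈ Ioc u v)
    (h₂ : a + (k₂ : ℝ) * (b - a) / N ∈ Ioc u v) :
    (b - a) / (2 * (N : ℝ) ^ 2) ≤ Delta P X u v := by
  set x : ℕ → ℝ := fun k => a + (k : ℝ) * (b - a) / N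
  set s := (Finset.Icc 1 N).image x
  have hN : (0 : ℝ) < N := by
    obtain ⟨h1, hN⟩ := Finset.mem_Icc.mp hk₁
    exact_mod_cast h1.trans hN
  have hgap (i j : ℕ) (hij : i < j) : x i + (b - a) / N ≤ x j := gridPoint_add_le hab.le hij
  have hx : StrictMono x := fun i j hij => by
    have := hgap i j hij
    have : 0 < (b - a) / N := div_pos (sub_pos.mpr hab) hN
    linarith
  have hs : ∀ᵐ ω ∂P, hX.mk X ω ∈ s := hX.ae_eq_mk.mono fun ω hω => by
    obtain ⟨k, hk, hXk⟩ := hval ω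
    exact Finset.mem_image.mpr ⟨k, hk, by rw [← hω, hXk]⟩
  have hunif : ∀ c ∈ s, P.real {ω | hX.mk X ω = c} = 1 / N := by
    intro c hc
    obtain ⟨k, hk, rfl⟩ := Finset.mem_image.mp hc
    have hfiber : {ω | X ω = x k} =ᵐ[P] {ω | hX.mk X ω = x k} := hX.ae_eq_mk.preimage {x k}
    rw [measureReal_def, ← measure_congr hfiber, hprob k hk]
    simp
  have hsgap : ∀ c ∈ s, ∀ c' ∈ s, c < c' → c + (b - a) / N ≤ c' := by
    intro c hc c' hc' hcc'
    obtain ⟨i, -, rfl⟩ := Finset.mem_image.mp hc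
    obtain ⟨j, -, rfl⟩ := Finset.mem_image.mp hc'
    exact hgap i j (hx.lt_iff_lt.mp hcc')
  have hT : 1 < #(s.filter (· ∈ Ioc u v)) :=
    Finset.one_lt_card.mpr ⟨x k₁, Finset.mem_filter.mpr ⟨Finset.mem_image_of_mem x hk₁, h₁⟩,
      x k₂, Finset.mem_filter.mpr ⟨Finset.mem_image_of_mem x hk₂, h₂⟩, hx.injective.ne hne⟩
  rw [Delta_congr_ae hX.ae_eq_mk]
  calc (b - a) / (2 * (N : ℝ) ^ 2) = 1 / N * ((b - a) / N / 2) := by field_simp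
    _ ≤ _ := mul_half_le_Delta hX.measurable_mk hs (by positivity) hunif
      (div_nonneg (sub_nonneg.mpr hab.le) hN.le) hsgap hT

end Grid

theorem lower_bound_discrete_partition_general {Ω : Type*} [MeasurableSpace Ω]
    (P : Measure Ω) [IsProbabilityMeasure P]
    (X : Ω → ℝ) (hX : Integrable X P)
    (a b : ℝ) (hab : a < b)
    (N : ℕ)
    (ε : ℝ) (hεW : ε < (b - a) / (2 * (N : ℝ) ^ 2))
    (hval : ∀ ω, ∃ k ∈ Finset.Icc 1 N, X ω = a + (k : ℝ) * (b - a) / N)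
    (hprob : ∀ k ∈ Finset.Icc 1 N,
      P {ω | X ω = a + (k : ℝ) * (b - a) / N} = 1 / (N : ENNReal))
    (m : ℕ)
    (r : ℕ → ℝ) (hr0 : r 0 = a) (hrm : r m = b)
    (hrerr : ∀ j, 1 ≤ j → j ≤ m →
      0 < P {ω | X ω ∈ Set.Ioc (r (j - 1)) (r j)} →
      Delta P X (r (j - 1)) (r j) ≤ ε) :
    N ≤ m := by
  by_contra! hmN
  have hcover (k : ℕ) (hk : k ∈ Finset.Icc 1 N) :
      ∃ j ∈ Finset.Icc 1 m, a + (k : ℝ) * (b - a) / N ∈ Ioc (r (j - 1)) (r j) :=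
    exists_mem_Ioc_pred_of_mem_Ioc (by rw [hr0, hrm]; exact gridPoint_mem_Ioc hab hk)
  choose! f hf using hcover
  obtain ⟨k₁, hk₁, k₂, hk₂, hne, hf₁₂⟩ :=
    Finset.exists_ne_map_eq_of_card_lt_of_maps_to (by simpa using hmN) fun k hk => (hf k hk).1
  obtain ⟨hj, hk₁I⟩ := hf k₁ hk₁
  have hk₂I := (hf k₂ hk₂).2
  rw [← hf₁₂] at hk₂I
  have hpos : 0 < P {ω | X ω ∈ Ioc (r (f k₁ - 1)) (r (f k₁))} := by
    have hsub : {ω | X ω = a + (k₁ : ℝ) * (b - a) / N}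
        ⊆ {ω | X ω ∈ Ioc (r (f k₁ - 1)) (r (f k₁))} :=
      fun ω (hω : X ω = _) => show X ω ∈ _ by rwa [hω]
    refine lt_of_lt_of_le ?_ (measure_mono hsub)
    simp [hprob k₁ hk₁]
  have hle :=
    le_Delta_of_two_gridPoints_mem_Ioc hX.aemeasurable hab hval hprob hk₁ hk₂ hne hk₁I hk₂I
  linarith [hrerr _ (Finset.mem_Icc.mp hj).1 (Finset.mem_Icc.mp hj).2 hpos]

/-- Let `N ≥ 1`, `0 < ε < W/(2N²)` with `W = b − a`, and let `X` be
the discrete random variable taking each value `x_k = a + k W/N` (`k = 1,…,N`) with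
probability `1/N`. Then every partition `(I_1,…,I_m)` of `(a, b]` into consecutive
half-open intervals `I_j = (r (j−1), r j]` with `Δ_X(I_j) ≤ ε` for every `j` with
`P(X ∈ I_j) > 0` must satisfy `m ≥ N`. -/
theorem lower_bound_discrete_partition {Ω : Type*} [MeasurableSpace Ω]
    (P : Measure Ω) [IsProbabilityMeasure P]
    (X : Ω → ℝ) (hX : Integrable X P)
    (a b : ℝ) (hab : a < b)
    (N : ℕ) (hN : 0 < N)
    (ε : ℝ) (hε : 0 < ε) (hεW : ε < (b - a) / (2 * (N : ℝ) ^ 2))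
    (hval : ∀ ω, ∃ k ∈ Finset.Icc 1 N, X ω = a + (k : ℝ) * (b - a) / N)
    (hprob : ∀ k ∈ Finset.Icc 1 N,
      P {ω | X ω = a + (k : ℝ) * (b - a) / N} = 1 / (N : ENNReal))
    (m : ℕ) (hm : 1 ≤ m)
    (r : ℕ → ℝ) (hr0 : r 0 = a) (hrm : r m = b)
    (hrmono : ∀ i < m, r i < r (i + 1))
    (hrerr : ∀ j, 1 ≤ j → j ≤ m →
      0 < P {ω | X ω ∈ Set.Ioc (r (j - 1)) (r j)} →
      Delta P X (r (j - 1)) (r j) ≤ ε) :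
    N ≤ m :=
  lower_bound_discrete_partition_general P X hX a b hab N ε hεW hval hprob m r hr0 hrm hrerr
end
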